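/- arXiv:0802.3930 — 4 statements merged into one kernel-verified Lean document; each statement's English description precedes it below -/
import Mathlib

section
/- For every monotone decreasing sequence (α_n) of positive real numbers tending to 0, there exists f ∈ Diff₀[0,1] such that the fixed-point set of f is exactly {0,1}, γ(f) = 1, and Γ_n(f) ≥ e^{α_n · n} for all n ∈ ℕ. -/
open Set Filter

/-- The sup norm over `[0,1]` of the derivative (within `[0,1]`) of a map. -/
noncomputable def supAbsDeriv (f : ℝ → ℝ) : ℝ :=
  sSup ((fun x => |derivWithin f (Set.Icc (0:ℝ) 1) x|) '' Set.Icc (0:ℝ) 1)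

/-- `IsDiff01 f g` says that `f` is a `C¹` diffeomorphism of `[0,1]` fixing `0` and `1`,
with everywhere positive derivative, and `g` is its inverse. -/
structure IsDiff01 (f g : ℝ → ℝ) : Prop where
  mapsTo : Set.MapsTo f (Set.Icc (0:ℝ) 1) (Set.Icc (0:ℝ) 1)
  inv_mapsTo : Set.MapsTo g (Set.Icc (0:ℝ) 1) (Set.Icc (0:ℝ) 1)
  left_inv : ∀ x ∈ Set.Icc (0:ℝ) 1, g (f x) = x
  right_inv : ∀ x ∈ Set.Icc (0:ℝ) 1, f (g x) = x
  map_zero : f 0 = 0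
  map_one : f 1 = 1
  contDiffOn : ContDiffOn ℝ 1 f (Set.Icc (0:ℝ) 1)
  inv_contDiffOn : ContDiffOn ℝ 1 g (Set.Icc (0:ℝ) 1)
  deriv_pos : ∀ x ∈ Set.Icc (0:ℝ) 1, 0 < derivWithin f (Set.Icc (0:ℝ) 1) x

/-- The growth sequence `Γ_n(f) = max (‖(fⁿ)'‖_∞, ‖(f⁻ⁿ)'‖_∞)`, where `g = f⁻¹`. -/
noncomputable def Gamma (f g : ℝ → ℝ) (n : ℕ) : ℝ :=
  max (supAbsDeriv (f^[n])) (supAbsDeriv (g^[n]))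

/-- `γ(f) = lim_n Γ_n(f)^(1/n) = 1`, where `g = f⁻¹`. -/
def GammaEqOne (f g : ℝ → ℝ) : Prop :=
  Filter.Tendsto (fun n : ℕ => (Gamma f g n) ^ (1/(n:ℝ))) Filter.atTop (nhds 1)

/-- A modulus of continuity: continuous, non-decreasing, nonnegative on `[0,1]`,
vanishing at `0`, and subadditive. -/
structure IsModCont (ω : ℝ → ℝ) : Prop where
  continuousOn : ContinuousOn ω (Set.Icc (0:ℝ) 1)
  monotoneOn : MonotoneOn ω (Set.Icc (0:ℝ) 1)
  nonneg : ∀ x ∈ Set.Icc (0:ℝ) 1, 0 ≤ ω x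
  map_zero : ω 0 = 0
  subadd : ∀ a b : ℝ, 0 ≤ a → 0 ≤ b → a + b ≤ 1 → ω (a + b) ≤ ω a + ω b

/-- Membership in `Diff₀^ω[0,1]`: the derivative of `f` has modulus of continuity
controlled by `ω` up to a multiplicative constant. -/
def InDiffOmega (ω f : ℝ → ℝ) : Prop :=
  ∃ C > 0, ∀ x ∈ Set.Icc (0:ℝ) 1, ∀ y ∈ Set.Icc (0:ℝ) 1,
    |derivWithin f (Set.Icc (0:ℝ) 1) x - derivWithin f (Set.Icc (0:ℝ) 1) y| ≤ C * ω |x - y|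

/-!
Conjugate a translation of `ℝ` into `(0, 1)`. If `G : ℝ → (0, 1)` is the distribution function of
a positive continuous integrable density `ρ`, then `f = G ∘ (· + 1) ∘ G⁻¹`, extended by `0 ↦ 0`,
`1 ↦ 1`, has no fixed point in `(0, 1)`, `fⁿ = G ∘ (· + n) ∘ G⁻¹` and
`(fⁿ)' (G t) = ρ (t + n) / ρ t`.

Take `ρ t = exp (-W |t|)`, where `W u = ∫₀ᵘ δ ⌊s⌋ ds` and `δₙ = max αₙ (2 / (n + 1))`. As `δ`
decreases, `W` is subadditive on `[0, ∞)`, so `ρ (t + a) / ρ t ≤ exp (W |a|)` with equality at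
`t = -a`: hence `Γₙ(f) = exp (W n) = exp (δ₀ + ⋯ + δₙ₋₁) ≥ exp (n αₙ)`, and `W n / n → 0` by
Cesàro, i.e. `γ(f) = 1`. As `δ → 0`, `ρ (t + a) / ρ t → 1` when `|t| → ∞`, which makes `f` a
`C¹` map of `[0, 1]` with `f' = 1` at the end points. The floor `2 / (n + 1)` gives
`W u ≥ 2 log (⌊u⌋ + 1)`, so `ρ` is integrable.
-/

open MeasureTheory Topology

namespace Borichev

section ConjugatedTranslation

structure IsPosDensity (ρ : ℝ → ℝ) : Prop where
  continuous : Continuous ρ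
  pos : ∀ t, 0 < ρ t
  integrable : Integrable ρ

noncomputable def cdf (ρ : ℝ → ℝ) (t : ℝ) : ℝ := (∫ s in Iic t, ρ s) / ∫ s, ρ s

noncomputable def cdfInv (ρ : ℝ → ℝ) : ℝ → ℝ := Function.invFun (cdf ρ)

/-- The translation `t ↦ t + a` of `ℝ`, transported to `(0, 1)` by `cdf ρ` and extended by the
identity to the rest of `ℝ`. -/
noncomputable def flow (ρ : ℝ → ℝ) (a x : ℝ) : ℝ :=
  if x ∈ Ioo 0 1 then cdf ρ (cdfInv ρ x + a) else x

noncomputable def flowDeriv (ρ : ℝ → ℝ) (a x : ℝ) : ℝ :=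
  if x ∈ Ioo 0 1 then ρ (cdfInv ρ x + a) / ρ (cdfInv ρ x) else 1

variable {ρ : ℝ → ℝ}

lemma flow_of_notMem {a x : ℝ} (hx : x ∉ Ioo 0 1) : flow ρ a x = x := if_neg hx

lemma flowDeriv_of_notMem {a x : ℝ} (hx : x ∉ Ioo 0 1) : flowDeriv ρ a x = 1 := if_neg hx

namespace IsPosDensity

variable (hρ : IsPosDensity ρ)
include hρ

lemma intervalIntegral_pos {a b : ℝ} (hab : a < b) : 0 < ∫ t in a..b, ρ t :=
  intervalIntegral.intervalIntegral_pos_of_pos_on hρ.integrable.intervalIntegrable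
    (fun t _ => hρ.pos t) hab

lemma setIntegral_Iic_sub_Iic (a b : ℝ) :
    (∫ s in Iic b, ρ s) - ∫ s in Iic a, ρ s = ∫ s in a..b, ρ s :=
  intervalIntegral.integral_Iic_sub_Iic hρ.integrable.integrableOn hρ.integrable.integrableOn

lemma setIntegral_Iic_pos (t : ℝ) : 0 < ∫ s in Iic t, ρ s := by
  have := hρ.setIntegral_Iic_sub_Iic (t - 1) t
  have := hρ.intervalIntegral_pos (sub_one_lt t)
  have := setIntegral_nonneg (μ := volume) (measurableSet_Iic (a := t - 1)) fun s _ => (hρ.pos s).le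
  linarith

lemma setIntegral_Iic_le_integral (t : ℝ) : ∫ s in Iic t, ρ s ≤ ∫ s, ρ s :=
  setIntegral_le_integral hρ.integrable (.of_forall fun s => (hρ.pos s).le)

lemma integral_pos : 0 < ∫ s, ρ s :=
  (hρ.setIntegral_Iic_pos 0).trans_le (hρ.setIntegral_Iic_le_integral 0)

lemma cdf_eq (t : ℝ) : cdf ρ t = cdf ρ 0 + (∫ s in (0:ℝ)..t, ρ s) / ∫ s, ρ s := by
  rw [cdf, cdf, ← hρ.setIntegral_Iic_sub_Iic, ← add_div, add_sub_cancel]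

lemma cdf_strictMono : StrictMono (cdf ρ) := fun a b hab => by
  rw [← sub_pos, cdf, cdf, ← sub_div, hρ.setIntegral_Iic_sub_Iic]
  exact div_pos (hρ.intervalIntegral_pos hab) hρ.integral_pos

lemma cdf_mem_Ioo (t : ℝ) : cdf ρ t ∈ Ioo 0 1 :=
  ⟨div_pos (hρ.setIntegral_Iic_pos t) hρ.integral_pos,
    (hρ.cdf_strictMono (lt_add_one t)).trans_le
      ((div_le_one hρ.integral_pos).2 (hρ.setIntegral_Iic_le_integral _))⟩

lemma hasDerivAt_cdf (t : ℝ) : HasDerivAt (cdf ρ) (ρ t / ∫ s, ρ s) t := by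
  have h : HasDerivAt (fun u => cdf ρ 0 + (∫ s in (0:ℝ)..u, ρ s) / ∫ s, ρ s)
      (ρ t / ∫ s, ρ s) t :=
    ((intervalIntegral.integral_hasDerivAt_right hρ.integrable.intervalIntegrable
      (hρ.continuous.stronglyMeasurableAtFilter _ _) hρ.continuous.continuousAt).div_const
      (∫ s, ρ s)).const_add (cdf ρ 0)
  exact h.congr_of_eventuallyEq (.of_forall hρ.cdf_eq)

lemma continuous_cdf : Continuous (cdf ρ) :=
  continuous_iff_continuousAt.2 fun t => (hρ.hasDerivAt_cdf t).continuousAt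

lemma tendsto_cdf_atBot : Tendsto (cdf ρ) atBot (𝓝 0) := by
  have h := ((intervalIntegral_tendsto_integral_Iic 0 hρ.integrable.integrableOn
    tendsto_id).div_const (∫ s, ρ s)).const_sub (cdf ρ 0)
  rw [cdf, sub_self] at h
  refine h.congr fun t => ?_
  rw [hρ.cdf_eq t, intervalIntegral.integral_symm, neg_div, sub_neg_eq_add]
  rfl

lemma tendsto_cdf_atTop : Tendsto (cdf ρ) atTop (𝓝 1) := by
  have h := ((intervalIntegral_tendsto_integral_Ioi 0 hρ.integrable.integrableOn
    tendsto_id).div_const (∫ s, ρ s)).const_add (cdf ρ 0)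
  rw [cdf, ← add_div, intervalIntegral.integral_Iic_add_Ioi hρ.integrable.integrableOn
    hρ.integrable.integrableOn, div_self hρ.integral_pos.ne'] at h
  exact h.congr fun t => (hρ.cdf_eq t).symm

lemma exists_cdf_eq {x : ℝ} (hx : x ∈ Ioo 0 1) : ∃ t, cdf ρ t = x :=
  mem_range_of_exists_le_of_exists_ge hρ.continuous_cdf
    ((hρ.tendsto_cdf_atBot.eventually_le_const hx.1).exists)
    ((hρ.tendsto_cdf_atTop.eventually_const_le hx.2).exists)

lemma cdfInv_cdf (t : ℝ) : cdfInv ρ (cdf ρ t) = t :=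
  Function.leftInverse_invFun hρ.cdf_strictMono.injective t

lemma cdf_cdfInv {x : ℝ} (hx : x ∈ Ioo 0 1) : cdf ρ (cdfInv ρ x) = x :=
  Function.invFun_eq (hρ.exists_cdf_eq hx)

lemma cdfInv_lt_iff {x : ℝ} (hx : x ∈ Ioo 0 1) {t : ℝ} : cdfInv ρ x < t ↔ x < cdf ρ t := by
  rw [← hρ.cdf_strictMono.lt_iff_lt, hρ.cdf_cdfInv hx]

lemma lt_cdfInv_iff {x : ℝ} (hx : x ∈ Ioo 0 1) {t : ℝ} : t < cdfInv ρ x ↔ cdf ρ t < x := by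
  rw [← hρ.cdf_strictMono.lt_iff_lt, hρ.cdf_cdfInv hx]

lemma continuousAt_cdfInv {x : ℝ} (hx : x ∈ Ioo 0 1) : ContinuousAt (cdfInv ρ) x := by
  have hmono : StrictMonoOn (cdfInv ρ) (Ioo 0 1) := fun y hy z hz hyz => by
    rwa [hρ.cdfInv_lt_iff hy, hρ.cdf_cdfInv hz]
  refine hmono.continuousAt_of_image_mem_nhds (Ioo_mem_nhds hx.1 hx.2) ?_
  have himage : cdfInv ρ '' Ioo 0 1 = univ :=
    eq_univ_of_forall fun t => ⟨cdf ρ t, hρ.cdf_mem_Ioo t, hρ.cdfInv_cdf t⟩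
  rw [himage]
  exact univ_mem

lemma tendsto_cdfInv_nhdsGT_zero : Tendsto (cdfInv ρ) (𝓝[>] 0) atBot := by
  refine tendsto_atBot.2 fun t => ?_
  filter_upwards [Ioo_mem_nhdsGT (hρ.cdf_mem_Ioo t).1] with x hx
  have hx01 : x ∈ Ioo 0 1 := ⟨hx.1, hx.2.trans (hρ.cdf_mem_Ioo t).2⟩
  exact ((hρ.cdfInv_lt_iff hx01).2 hx.2).le

lemma tendsto_cdfInv_nhdsLT_one : Tendsto (cdfInv ρ) (𝓝[<] 1) atTop := by
  refine tendsto_atTop.2 fun t => ?_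
  filter_upwards [Ioo_mem_nhdsLT (hρ.cdf_mem_Ioo t).2] with x hx
  have hx01 : x ∈ Ioo 0 1 := ⟨(hρ.cdf_mem_Ioo t).1.trans hx.1, hx.2⟩
  exact ((hρ.lt_cdfInv_iff hx01).2 hx.1).le

lemma flow_cdf (a t : ℝ) : flow ρ a (cdf ρ t) = cdf ρ (t + a) := by
  rw [flow, if_pos (hρ.cdf_mem_Ioo t), hρ.cdfInv_cdf]

lemma flowDeriv_cdf (a t : ℝ) : flowDeriv ρ a (cdf ρ t) = ρ (t + a) / ρ t := by
  rw [flowDeriv, if_pos (hρ.cdf_mem_Ioo t), hρ.cdfInv_cdf]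

lemma flow_flow (a b x : ℝ) : flow ρ a (flow ρ b x) = flow ρ (b + a) x := by
  by_cases hx : x ∈ Ioo 0 1
  · obtain ⟨t, rfl⟩ := hρ.exists_cdf_eq hx
    rw [hρ.flow_cdf, hρ.flow_cdf, hρ.flow_cdf, add_assoc]
  · rw [flow_of_notMem hx, flow_of_notMem hx, flow_of_notMem hx]

lemma flow_zero (x : ℝ) : flow ρ 0 x = x := by
  by_cases hx : x ∈ Ioo 0 1
  · obtain ⟨t, rfl⟩ := hρ.exists_cdf_eq hx
    rw [hρ.flow_cdf, add_zero]
  · exact flow_of_notMem hx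

lemma iterate_flow (a : ℝ) (n : ℕ) : (flow ρ a)^[n] = flow ρ (n * a) := by
  induction n with
  | zero => funext x; simp [hρ.flow_zero]
  | succ n ih =>
    funext x
    rw [Function.iterate_succ_apply', ih, hρ.flow_flow]
    push_cast; ring_nf

lemma mapsTo_flow (a : ℝ) : MapsTo (flow ρ a) (Icc 0 1) (Icc 0 1) := fun x hx => by
  by_cases hx' : x ∈ Ioo 0 1
  · obtain ⟨t, rfl⟩ := hρ.exists_cdf_eq hx'
    rw [hρ.flow_cdf]
    exact Ioo_subset_Icc_self (hρ.cdf_mem_Ioo _)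
  · rwa [flow_of_notMem hx']

lemma flowDeriv_pos (a x : ℝ) : 0 < flowDeriv ρ a x := by
  unfold flowDeriv
  split_ifs
  · exact div_pos (hρ.pos _) (hρ.pos _)
  · exact one_pos

lemma hasDerivAt_flow (a : ℝ) {x : ℝ} (hx : x ∈ Ioo 0 1) :
    HasDerivAt (flow ρ a) (flowDeriv ρ a x) x := by
  obtain ⟨t, rfl⟩ := hρ.exists_cdf_eq hx
  have hZ := hρ.integral_pos
  have hinv : HasDerivAt (cdfInv ρ) (ρ t / ∫ s, ρ s)⁻¹ (cdf ρ t) := by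
    refine .of_local_left_inverse (f := cdf ρ) (hρ.continuousAt_cdfInv hx) ?_
      (div_pos (hρ.pos t) hZ).ne' ?_
    · rw [hρ.cdfInv_cdf]; exact hρ.hasDerivAt_cdf t
    · filter_upwards [isOpen_Ioo.mem_nhds hx] with y hy using hρ.cdf_cdfInv hy
  have hshift :
      HasDerivAt (fun s => cdf ρ (s + a)) (ρ (t + a) / ∫ s, ρ s) (cdfInv ρ (cdf ρ t)) := by
    rw [hρ.cdfInv_cdf]; exact (hρ.hasDerivAt_cdf (t + a)).comp_add_const t a
  have hcomp := hshift.comp (cdf ρ t) hinv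
  rw [hρ.flowDeriv_cdf, show ρ (t + a) / ρ t = ρ (t + a) / (∫ s, ρ s) * (ρ t / ∫ s, ρ s)⁻¹ by
    field_simp [(hρ.pos t).ne']]
  refine hcomp.congr_of_eventuallyEq ?_
  filter_upwards [isOpen_Ioo.mem_nhds hx] with y hy using if_pos hy

lemma differentiableOn_flow (a : ℝ) : DifferentiableOn ℝ (flow ρ a) (Ioo 0 1) :=
  fun _ hx => (hρ.hasDerivAt_flow a hx).differentiableAt.differentiableWithinAt

lemma continuousWithinAt_flow_zero (a : ℝ) : ContinuousWithinAt (flow ρ a) (Ioo 0 1) 0 := by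
  rw [ContinuousWithinAt, nhdsWithin_Ioo_eq_nhdsGT one_pos, flow_of_notMem (by simp)]
  refine (hρ.tendsto_cdf_atBot.comp ((tendsto_atBot_add_const_right _ a tendsto_id).comp
    hρ.tendsto_cdfInv_nhdsGT_zero)).congr' ?_
  filter_upwards [Ioo_mem_nhdsGT one_pos] with x hx using (if_pos hx).symm

lemma continuousWithinAt_flow_one (a : ℝ) : ContinuousWithinAt (flow ρ a) (Ioo 0 1) 1 := by
  rw [ContinuousWithinAt, nhdsWithin_Ioo_eq_nhdsLT one_pos, flow_of_notMem (by simp)]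
  refine (hρ.tendsto_cdf_atTop.comp ((tendsto_atTop_add_const_right _ a tendsto_id).comp
    hρ.tendsto_cdfInv_nhdsLT_one)).congr' ?_
  filter_upwards [Ioo_mem_nhdsLT one_pos] with x hx using (if_pos hx).symm

section Boundary

variable {a : ℝ} (hratio : Tendsto (fun t => ρ (t + a) / ρ t) (cocompact ℝ) (𝓝 1))
include hratio

lemma tendsto_flowDeriv_nhdsGT_zero : Tendsto (flowDeriv ρ a) (𝓝[>] 0) (𝓝 1) := by
  refine ((hratio.mono_left atBot_le_cocompact).comp hρ.tendsto_cdfInv_nhdsGT_zero).congr' ?_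
  filter_upwards [Ioo_mem_nhdsGT one_pos] with x hx using (if_pos hx).symm

lemma tendsto_flowDeriv_nhdsLT_one : Tendsto (flowDeriv ρ a) (𝓝[<] 1) (𝓝 1) := by
  refine ((hratio.mono_left atTop_le_cocompact).comp hρ.tendsto_cdfInv_nhdsLT_one).congr' ?_
  filter_upwards [Ioo_mem_nhdsLT one_pos] with x hx using (if_pos hx).symm

lemma hasDerivWithinAt_flow_zero : HasDerivWithinAt (flow ρ a) 1 (Ici 0) 0 := by
  refine hasDerivWithinAt_Ici_of_tendsto_deriv (hρ.differentiableOn_flow a)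
    (hρ.continuousWithinAt_flow_zero a) (Ioo_mem_nhdsGT one_pos) ((hρ.tendsto_flowDeriv_nhdsGT_zero
    hratio).congr' ?_)
  filter_upwards [Ioo_mem_nhdsGT one_pos] with x hx using (hρ.hasDerivAt_flow a hx).deriv.symm

lemma hasDerivWithinAt_flow_one : HasDerivWithinAt (flow ρ a) 1 (Iic 1) 1 := by
  refine hasDerivWithinAt_Iic_of_tendsto_deriv (hρ.differentiableOn_flow a)
    (hρ.continuousWithinAt_flow_one a) (Ioo_mem_nhdsLT one_pos) ((hρ.tendsto_flowDeriv_nhdsLT_one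
    hratio).congr' ?_)
  filter_upwards [Ioo_mem_nhdsLT one_pos] with x hx using (hρ.hasDerivAt_flow a hx).deriv.symm

lemma hasDerivWithinAt_flow {x : ℝ} (hx : x ∈ Icc 0 1) :
    HasDerivWithinAt (flow ρ a) (flowDeriv ρ a x) (Icc 0 1) x := by
  rcases eq_endpoints_or_mem_Ioo_of_mem_Icc hx with rfl | rfl | hx'
  · rw [flowDeriv_of_notMem (by simp)]
    exact (hρ.hasDerivWithinAt_flow_zero hratio).mono Icc_subset_Ici_self
  · rw [flowDeriv_of_notMem (by simp)]
    exact (hρ.hasDerivWithinAt_flow_one hratio).mono Icc_subset_Iic_self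
  · exact (hρ.hasDerivAt_flow a hx').hasDerivWithinAt

lemma derivWithin_flow {x : ℝ} (hx : x ∈ Icc 0 1) :
    derivWithin (flow ρ a) (Icc 0 1) x = flowDeriv ρ a x :=
  (hρ.hasDerivWithinAt_flow hratio hx).derivWithin (uniqueDiffOn_Icc one_pos x hx)

lemma continuousOn_flowDeriv : ContinuousOn (flowDeriv ρ a) (Icc 0 1) := by
  intro x hx
  rcases eq_endpoints_or_mem_Ioo_of_mem_Icc hx with rfl | rfl | hx'
  · rw [← continuousWithinAt_sdiff_self, ContinuousWithinAt, flowDeriv_of_notMem (by simp)]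
    exact (hρ.tendsto_flowDeriv_nhdsGT_zero hratio).mono_left
      (nhdsWithin_mono _ fun y hy => lt_of_le_of_ne hy.1.1 (Ne.symm hy.2))
  · rw [← continuousWithinAt_sdiff_self, ContinuousWithinAt, flowDeriv_of_notMem (by simp)]
    exact (hρ.tendsto_flowDeriv_nhdsLT_one hratio).mono_left
      (nhdsWithin_mono _ fun y hy => lt_of_le_of_ne hy.1.2 hy.2)
  · have hinv := hρ.continuousAt_cdfInv hx'
    have hquot : ContinuousAt (fun y => ρ (cdfInv ρ y + a) / ρ (cdfInv ρ y)) x :=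
      ((hρ.continuous.continuousAt.comp (hinv.add continuousAt_const)).div
        (hρ.continuous.continuousAt.comp hinv) (hρ.pos _).ne')
    refine (hquot.congr ?_).continuousWithinAt
    filter_upwards [isOpen_Ioo.mem_nhds hx'] with y hy using (if_pos hy).symm

lemma contDiffOn_flow : ContDiffOn ℝ 1 (flow ρ a) (Icc 0 1) := by
  rw [show (1 : WithTop ℕ∞) = 0 + 1 from rfl,
    contDiffOn_succ_iff_derivWithin (uniqueDiffOn_Icc one_pos), contDiffOn_zero]
  exact ⟨fun x hx => (hρ.hasDerivWithinAt_flow hratio hx).differentiableWithinAt, by simp,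
    (hρ.continuousOn_flowDeriv hratio).congr fun x hx => hρ.derivWithin_flow hratio hx⟩

lemma supAbsDeriv_flow {M : ℝ} (hM : IsGreatest (range fun t => ρ (t + a) / ρ t) M) :
    supAbsDeriv (flow ρ a) = M := by
  have h1M : 1 ≤ M := le_of_tendsto hratio (.of_forall fun t => hM.2 ⟨t, rfl⟩)
  have habs : ∀ x ∈ Icc (0:ℝ) 1, |derivWithin (flow ρ a) (Icc 0 1) x| = flowDeriv ρ a x :=
    fun x hx => by rw [hρ.derivWithin_flow hratio hx, abs_of_pos (hρ.flowDeriv_pos a x)]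
  rw [supAbsDeriv, image_congr habs]
  refine IsGreatest.csSup_eq ⟨?_, ?_⟩
  · obtain ⟨t, ht⟩ := hM.1
    exact ⟨cdf ρ t, Ioo_subset_Icc_self (hρ.cdf_mem_Ioo t), by rw [hρ.flowDeriv_cdf, ← ht]⟩
  · rintro _ ⟨x, -, rfl⟩
    by_cases hx : x ∈ Ioo 0 1
    · obtain ⟨t, rfl⟩ := hρ.exists_cdf_eq hx
      rw [hρ.flowDeriv_cdf]
      exact hM.2 ⟨t, rfl⟩
    · rwa [flowDeriv_of_notMem hx]

end Boundary

lemma isDiff01_flow (hratio : ∀ a, Tendsto (fun t => ρ (t + a) / ρ t) (cocompact ℝ) (𝓝 1))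
    (a : ℝ) : IsDiff01 (flow ρ a) (flow ρ (-a)) where
  mapsTo := hρ.mapsTo_flow a
  inv_mapsTo := hρ.mapsTo_flow (-a)
  left_inv x _ := by rw [hρ.flow_flow, add_neg_cancel, hρ.flow_zero]
  right_inv x _ := by rw [hρ.flow_flow, neg_add_cancel, hρ.flow_zero]
  map_zero := flow_of_notMem (by simp)
  map_one := flow_of_notMem (by simp)
  contDiffOn := hρ.contDiffOn_flow (hratio a)
  inv_contDiffOn := hρ.contDiffOn_flow (hratio (-a))
  deriv_pos x hx := by rw [hρ.derivWithin_flow (hratio a) hx]; exact hρ.flowDeriv_pos a x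

lemma fixedPoints_flow {a : ℝ} (ha : a ≠ 0) :
    {x | x ∈ Icc (0:ℝ) 1 ∧ flow ρ a x = x} = {0, 1} := by
  ext x
  simp only [mem_insert_iff, mem_singleton_iff]
  constructor
  · rintro ⟨hx, hfix⟩
    by_contra! h
    obtain ⟨t, rfl⟩ := hρ.exists_cdf_eq ⟨lt_of_le_of_ne hx.1 (Ne.symm h.1), lt_of_le_of_ne hx.2 h.2⟩
    rw [hρ.flow_cdf] at hfix
    exact ha (by linarith [hρ.cdf_strictMono.injective hfix])
  · rintro (rfl | rfl) <;> exact ⟨by simp, flow_of_notMem (by simp)⟩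

end IsPosDensity

end ConjugatedTranslation

section Weight

noncomputable def rate (δ : ℕ → ℝ) (s : ℝ) : ℝ := δ ⌊s⌋₊

noncomputable def weight (δ : ℕ → ℝ) (u : ℝ) : ℝ := ∫ s in (0:ℝ)..u, rate δ s

variable {δ : ℕ → ℝ}

lemma rate_antitone (hδ : Antitone δ) : Antitone (rate δ) :=
  fun _ _ h => hδ (Nat.floor_mono h)

lemma rate_intervalIntegrable (hδ : Antitone δ) (a b : ℝ) :
    IntervalIntegrable (rate δ) volume a b :=
  (rate_antitone hδ).intervalIntegrable

lemma weight_sub (hδ : Antitone δ) (u v : ℝ) :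
    weight δ v - weight δ u = ∫ s in u..v, rate δ s := by
  rw [weight, weight, sub_eq_iff_eq_add', intervalIntegral.integral_add_adjacent_intervals
    (rate_intervalIntegrable hδ 0 u) (rate_intervalIntegrable hδ u v)]

lemma weight_mono (hδ : Antitone δ) (h0 : ∀ n, 0 ≤ δ n) : Monotone (weight δ) := fun u v huv => by
  rw [← sub_nonneg, weight_sub hδ]
  exact intervalIntegral.integral_nonneg huv fun s _ => h0 _

lemma weight_sub_le (hδ : Antitone δ) {u v : ℝ} (huv : u ≤ v) :
    weight δ v - weight δ u ≤ (v - u) * rate δ u := by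
  rw [weight_sub hδ, ← smul_eq_mul, ← intervalIntegral.integral_const]
  exact intervalIntegral.integral_mono_on huv (rate_intervalIntegrable hδ u v)
    intervalIntegrable_const fun s hs => rate_antitone hδ hs.1

lemma abs_weight_sub_le (hδ : Antitone δ) (h0 : ∀ n, 0 ≤ δ n) (u v : ℝ) :
    |weight δ v - weight δ u| ≤ |v - u| * rate δ (min u v) := by
  rcases le_total u v with huv | hvu
  · rw [abs_of_nonneg (sub_nonneg.2 (weight_mono hδ h0 huv)), abs_of_nonneg (sub_nonneg.2 huv),
      min_eq_left huv]
    exact weight_sub_le hδ huv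
  · rw [abs_sub_comm, abs_of_nonneg (sub_nonneg.2 (weight_mono hδ h0 hvu)), abs_sub_comm,
      abs_of_nonneg (sub_nonneg.2 hvu), min_eq_right hvu]
    exact weight_sub_le hδ hvu

lemma weight_add_le (hδ : Antitone δ) {u v : ℝ} (hu : 0 ≤ u) (hv : 0 ≤ v) :
    weight δ (u + v) ≤ weight δ u + weight δ v := by
  have hshift : ∫ s in u..(u + v), rate δ s ≤ ∫ s in (0:ℝ)..v, rate δ s := by
    have hcomp : ∫ s in (0:ℝ)..v, rate δ (s + u) = ∫ s in u..(u + v), rate δ s := by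
      rw [intervalIntegral.integral_comp_add_right, zero_add, add_comm]
    rw [← hcomp]
    exact intervalIntegral.integral_mono_on hv
      ((rate_antitone hδ).comp_monotone (monotone_id.add_const u)).intervalIntegrable
      (rate_intervalIntegrable hδ 0 v) fun s _ => rate_antitone hδ (by linarith)
  have h₁ := weight_sub hδ u (u + v)
  have h₂ := weight_sub hδ 0 v
  simp only [weight, intervalIntegral.integral_same, sub_zero] at h₁ h₂ ⊢
  linarith

lemma continuous_weight (hδ : Antitone δ) : Continuous (weight δ) :=
  intervalIntegral.continuous_primitive (rate_intervalIntegrable hδ) 0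

lemma weight_natCast (hδ : Antitone δ) (n : ℕ) : weight δ n = ∑ k ∈ Finset.range n, δ k := by
  induction n with
  | zero => simp [weight]
  | succ n ih =>
    have hstep : ∫ s in (n:ℝ)..(n + 1 : ℕ), rate δ s = δ n := by
      rw [intervalIntegral.integral_of_le (by simp), integral_Ioc_eq_integral_Ioo,
        setIntegral_congr_fun measurableSet_Ioo (g := fun _ => δ n)]
      · simp
      · intro s hs
        have hs₀ : (0:ℝ) ≤ s := (Nat.cast_nonneg n).trans hs.1.le
        simp only [rate, (Nat.floor_eq_iff hs₀).2 ⟨hs.1.le, by exact_mod_cast hs.2⟩]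
    rw [Finset.sum_range_succ, ← ih, ← hstep, ← weight_sub hδ]
    ring

end Weight

section Density

open Real

noncomputable def density (δ : ℕ → ℝ) (t : ℝ) : ℝ := exp (-weight δ |t|)

variable {δ : ℕ → ℝ}

lemma density_pos (t : ℝ) : 0 < density δ t := exp_pos _

lemma continuous_density (hδ : Antitone δ) : Continuous (density δ) :=
  continuous_exp.comp ((continuous_weight hδ).comp continuous_abs).neg

lemma density_add_div (t a : ℝ) :
    density δ (t + a) / density δ t = exp (weight δ |t| - weight δ |t + a|) := by
  rw [density, density, ← exp_sub]
  ring_nf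

lemma density_neg_add_div (a : ℝ) :
    density δ (-a + a) / density δ (-a) = exp (weight δ |a|) := by
  rw [density_add_div, neg_add_cancel, abs_zero, abs_neg]
  simp [weight]

lemma density_add_div_le (hδ : Antitone δ) (h0 : ∀ n, 0 ≤ δ n) (t a : ℝ) :
    density δ (t + a) / density δ t ≤ exp (weight δ |a|) := by
  rw [density_add_div, exp_le_exp, sub_le_iff_le_add']
  calc weight δ |t| ≤ weight δ (|t + a| + |a|) := weight_mono hδ h0 (by
        simpa using abs_sub (t + a) a)
    _ ≤ weight δ |t + a| + weight δ |a| := weight_add_le hδ (abs_nonneg _) (abs_nonneg _)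

lemma tendsto_density_add_div (hδ : Antitone δ) (h0 : ∀ n, 0 ≤ δ n)
    (hlim : Tendsto δ atTop (𝓝 0)) (a : ℝ) :
    Tendsto (fun t => density δ (t + a) / density δ t) (cocompact ℝ) (𝓝 1) := by
  have hrate : Tendsto (fun t : ℝ => |a| * rate δ (|t| - |a|)) (cocompact ℝ) (𝓝 0) := by
    have h := ((hlim.comp tendsto_nat_floor_atTop).comp (tendsto_atTop_add_const_right _ (-|a|)
      (tendsto_norm_cocompact_atTop (E := ℝ)))).const_mul |a|
    rw [mul_zero] at h
    exact h.congr fun t => by simp only [Function.comp_apply, norm_eq_abs, rate, sub_eq_add_neg]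
  have hW : Tendsto (fun t => weight δ |t| - weight δ |t + a|) (cocompact ℝ) (𝓝 0) := by
    refine squeeze_zero_norm (fun t => ?_) hrate
    rw [norm_eq_abs, abs_sub_comm]
    refine (abs_weight_sub_le hδ h0 _ _).trans (mul_le_mul ?_ ?_ (h0 _) (abs_nonneg a))
    · simpa using abs_abs_sub_abs_le_abs_sub (t + a) t
    · have : |t| ≤ |t + a| + |a| := by simpa using abs_sub (t + a) a
      exact rate_antitone hδ (le_min (by linarith [abs_nonneg a]) (by linarith))
  have h := (continuous_exp.tendsto 0).comp hW
  rw [exp_zero] at h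
  exact h.congr fun t => (density_add_div t a).symm

lemma density_le (hδ : Antitone δ) (h2 : ∀ n : ℕ, 2 / (n + 1) ≤ δ n) (t : ℝ) :
    density δ t ≤ 2 * (1 + t ^ 2)⁻¹ := by
  set m := ⌊|t|⌋₊
  have h0 : ∀ n, 0 ≤ δ n := fun n => (by positivity : (0:ℝ) ≤ 2 / (n + 1)).trans (h2 n)
  have hlog : 2 * log (m + 1) ≤ weight δ |t| := calc
    2 * log (m + 1) ≤ 2 * harmonic m := by
      simpa using mul_le_mul_of_nonneg_left (log_add_one_le_harmonic m) zero_le_two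
    _ = ∑ k ∈ Finset.range m, 2 / ((k : ℝ) + 1) := by
      simp [harmonic, Finset.mul_sum, div_eq_mul_inv]
    _ ≤ weight δ m := by
      rw [weight_natCast hδ]; exact Finset.sum_le_sum fun k _ => h2 k
    _ ≤ weight δ |t| := weight_mono hδ h0 (Nat.floor_le (abs_nonneg t))
  have hm : |t| < m + 1 := Nat.lt_floor_add_one _
  have hsq : 1 + t ^ 2 ≤ 2 * ((m : ℝ) + 1) ^ 2 := by
    nlinarith [sq_abs t, abs_nonneg t, (Nat.cast_nonneg m : (0:ℝ) ≤ m)]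
  calc density δ t ≤ exp (-(2 * log (m + 1))) := exp_le_exp.2 (neg_le_neg hlog)
    _ = (((m : ℝ) + 1) ^ 2)⁻¹ := by
      rw [← log_rpow (by positivity), exp_neg, exp_log (by positivity)]; norm_cast
    _ ≤ 2 * (1 + t ^ 2)⁻¹ := by
      rw [← div_eq_mul_inv, inv_eq_one_div, div_le_div_iff₀ (by positivity) (by positivity)]
      linarith

lemma integrable_density (hδ : Antitone δ) (h2 : ∀ n : ℕ, 2 / (n + 1) ≤ δ n) :
    Integrable (density δ) :=
  (integrable_inv_one_add_sq.const_mul 2).mono' (continuous_density hδ).aestronglyMeasurable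
    (.of_forall fun t => by
      rw [norm_of_nonneg (density_pos t).le]; exact density_le hδ h2 t)

end Density

section Growth

variable {δ : ℕ → ℝ}

lemma isPosDensity_density (hδ : Antitone δ) (h2 : ∀ n : ℕ, 2 / (n + 1) ≤ δ n) :
    IsPosDensity (density δ) :=
  ⟨continuous_density hδ, density_pos, integrable_density hδ h2⟩

lemma isGreatest_density_add_div (hδ : Antitone δ) (h0 : ∀ n, 0 ≤ δ n) (a : ℝ) :
    IsGreatest (range fun t => density δ (t + a) / density δ t) (Real.exp (weight δ |a|)) :=
  ⟨⟨-a, density_neg_add_div a⟩, by rintro _ ⟨t, rfl⟩; exact density_add_div_le hδ h0 t a⟩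

lemma natCast_mul_le_weight (hδ : Antitone δ) (n : ℕ) : n * δ n ≤ weight δ n := by
  rw [weight_natCast hδ]
  simpa using Finset.card_nsmul_le_sum (Finset.range n) δ (δ n)
    fun k hk => hδ (Finset.mem_range.1 hk).le

lemma tendsto_weight_div (hδ : Antitone δ) (hlim : Tendsto δ atTop (𝓝 0)) :
    Tendsto (fun n : ℕ => weight δ n / n) atTop (𝓝 0) := by
  simpa [weight_natCast hδ, div_eq_inv_mul] using hlim.cesaro

variable (hδ : Antitone δ) (hlim : Tendsto δ atTop (𝓝 0)) (h2 : ∀ n : ℕ, 2 / (n + 1) ≤ δ n)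
include hδ hlim h2

lemma isDiff01_flow_density : IsDiff01 (flow (density δ) 1) (flow (density δ) (-1)) :=
  (isPosDensity_density hδ h2).isDiff01_flow
    (tendsto_density_add_div hδ (hδ.le_of_tendsto hlim) hlim) 1

lemma gamma_flow_density (n : ℕ) :
    Gamma (flow (density δ) 1) (flow (density δ) (-1)) n = Real.exp (weight δ n) := by
  have hρ := isPosDensity_density hδ h2
  have hsup (a : ℝ) : supAbsDeriv (flow (density δ) a) = Real.exp (weight δ |a|) :=
    hρ.supAbsDeriv_flow (tendsto_density_add_div hδ (hδ.le_of_tendsto hlim) hlim a)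
      (isGreatest_density_add_div hδ (hδ.le_of_tendsto hlim) a)
  rw [Gamma, hρ.iterate_flow, hρ.iterate_flow, hsup, hsup]
  simp

lemma gammaEqOne_flow_density : GammaEqOne (flow (density δ) 1) (flow (density δ) (-1)) := by
  have h := (Real.continuous_exp.tendsto 0).comp (tendsto_weight_div hδ hlim)
  rw [Real.exp_zero] at h
  refine h.congr fun n => ?_
  rw [gamma_flow_density hδ hlim h2, Function.comp_apply, ← Real.exp_mul, mul_one_div]

end Growth

end Borichev

theorem growth_no_gap_general (α : ℕ → ℝ) (hanti : Antitone α)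
    (hlim : Filter.Tendsto α Filter.atTop (nhds 0)) :
    ∃ f g : ℝ → ℝ, IsDiff01 f g ∧
      {x | x ∈ Set.Icc (0:ℝ) 1 ∧ f x = x} = {0, 1} ∧
      GammaEqOne f g ∧
      ∀ n : ℕ, 1 ≤ n → Real.exp (α n * n) ≤ Gamma f g n := by
  set δ : ℕ → ℝ := fun n => max (α n) (2 / (n + 1))
  have hδ : Antitone δ := fun m n hmn => max_le_max (hanti hmn) (by gcongr)
  have h2 : ∀ n : ℕ, 2 / ((n : ℝ) + 1) ≤ δ n := fun n => le_max_right _ _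
  have hδlim : Tendsto δ atTop (𝓝 0) := by
    simpa [δ, div_eq_mul_inv] using
      hlim.max ((tendsto_one_div_add_atTop_nhds_zero_nat (𝕜 := ℝ)).const_mul 2)
  refine ⟨Borichev.flow (Borichev.density δ) 1, Borichev.flow (Borichev.density δ) (-1),
    Borichev.isDiff01_flow_density hδ hδlim h2,
    (Borichev.isPosDensity_density hδ h2).fixedPoints_flow one_ne_zero,
    Borichev.gammaEqOne_flow_density hδ hδlim h2, fun n _ => ?_⟩
  rw [Borichev.gamma_flow_density hδ hδlim h2, Real.exp_le_exp, mul_comm]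
  exact (mul_le_mul_of_nonneg_left (le_max_left _ _) n.cast_nonneg).trans
    (Borichev.natCast_mul_le_weight hδ n)

/-- **Theorem 1 (Borichev).** For every monotone decreasing sequence `(α_n)` of positive
numbers tending to `0`, there is `f ∈ Diff₀[0,1]` whose fixed-point set is exactly `{0,1}`,
with `γ(f) = 1`, and `Γ_n(f) ≥ exp (α_n · n)` for all `n ∈ ℕ`. -/
theorem growth_no_gap (α : ℕ → ℝ) (hpos : ∀ n, 0 < α n) (hanti : Antitone α)
    (hlim : Filter.Tendsto α Filter.atTop (nhds 0)) :
    ∃ f g : ℝ → ℝ, IsDiff01 f g ∧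
      {x | x ∈ Set.Icc (0:ℝ) 1 ∧ f x = x} = {0, 1} ∧
      GammaEqOne f g ∧
      ∀ n : ℕ, 1 ≤ n → Real.exp (α n * n) ≤ Gamma f g n :=
  growth_no_gap_general α hanti hlim
end

section
/- Let f ∈ Diff₀[0,1] be a C²-smooth diffeomorphism with γ(f) = 1. Then there exists a constant C(f) > 0 such that Γ_n(f) ≤ C(f) · n² for all n ∈ ℕ. -/
open Set Filter

/-!
Since `γ(f) = 1`, every fixed point `p` of `f` has `f'(p) = 1`: otherwise `Γ_n(f)` would grow
like `max (f'(p), 1 / f'(p)) ^ n`. So `u = f - id`, whose derivative is `L`-Lipschitz as `f` is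
`C²`, vanishes at `0` and `1`, and `u' = 0` wherever `u = 0`. Landau's inequality
`u'² ≤ 4 L |u|` follows, so `√|u|` is `√L`-Lipschitz between consecutive points of an orbit
`xₖ = fᵏ x`. For the steps `ℓₖ = |xₖ₊₁ - xₖ|` this reads `|√ℓₖ₊₁ - √ℓₖ| ≤ √L ℓₖ`, which makes
`ℓₙ / ℓ₀` and `ℓ₀ / ℓₙ` both `O(n²)`. By the mean value theorem `ℓₙ / ℓ₀ = ∏ f'(ηₖ)` with `ηₖ`
between `xₖ` and `xₖ₊₁`, and as `∑ ℓₖ ≤ 1` this product is within a factor `e^(L/δ)` of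
`(fⁿ)'(x) = ∏ f'(xₖ)`, where `δ = min f'`. The derivatives of `f⁻ⁿ` are the reciprocals of
those of `fⁿ`.
-/

open Topology

local notation "𝕀" => Set.Icc (0 : ℝ) 1

section RealCalculus

variable {u u' : ℝ → ℝ} {L a b : ℝ}

theorem abs_sub_sub_mul_le_of_lipschitz (hL : 0 ≤ L)
    (hu : ∀ s ∈ uIcc a b, HasDerivWithinAt u (u' s) (uIcc a b) s)
    (hLip : ∀ s ∈ uIcc a b, |u' s - u' a| ≤ L * |s - a|) :
    |u b - u a - u' a * (b - a)| ≤ L * (b - a) ^ 2 := by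
  have hder : ∀ s ∈ uIcc a b,
      HasDerivWithinAt (fun z => u z - u' a * z) (u' s - u' a) (uIcc a b) s := fun s hs =>
    (hu s hs).sub (((hasDerivWithinAt_id s _).const_mul (u' a)).congr_deriv (mul_one _))
  have hbound : ∀ s ∈ uIcc a b, ‖u' s - u' a‖ ≤ L * |b - a| := fun s hs =>
    (hLip s hs).trans (mul_le_mul_of_nonneg_left (abs_sub_left_of_mem_uIcc hs) hL)
  have := (convex_uIcc a b).norm_image_sub_le_of_norm_hasDerivWithin_le hder hbound
    left_mem_uIcc right_mem_uIcc
  calc |u b - u a - u' a * (b - a)| = ‖(u b - u' a * b) - (u a - u' a * a)‖ := by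
        rw [Real.norm_eq_abs]; ring_nf
    _ ≤ L * |b - a| * ‖b - a‖ := this
    _ = L * (b - a) ^ 2 := by rw [Real.norm_eq_abs, mul_assoc, ← abs_mul, ← sq, abs_sq]

theorem exists_mem_uIcc_sub_eq_mul_sub
    (hu : ∀ s ∈ uIcc a b, HasDerivWithinAt u (u' s) (uIcc a b) s) :
    ∃ c ∈ uIcc a b, u b - u a = u' c * (b - a) := by
  wlog hab : a < b generalizing a b
  · rcases (not_lt.1 hab).eq_or_lt with rfl | hba
    · exact ⟨b, right_mem_uIcc, by ring⟩
    · obtain ⟨c, hc, h⟩ := this (uIcc_comm a b ▸ hu) hba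
      exact ⟨c, uIcc_comm a b ▸ hc, by linarith⟩
  rw [uIcc_of_lt hab] at hu ⊢
  obtain ⟨c, hc, h⟩ := exists_hasDerivAt_eq_slope u u' hab
    (fun s hs => (hu s hs).continuousWithinAt)
    (fun s hs => (hu s (Ioo_subset_Icc_self hs)).hasDerivAt (Icc_mem_nhds hs.1 hs.2))
  exact ⟨c, Ioo_subset_Icc_self hc, by rw [h, div_mul_cancel₀ _ (sub_ne_zero.2 hab.ne')]⟩

theorem sq_deriv_le_of_pos (hL : 0 < L)
    (hu : ∀ s ∈ Icc a b, HasDerivWithinAt u (u' s) (Icc a b) s)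
    (hLip : ∀ s ∈ Icc a b, ∀ r ∈ Icc a b, |u' s - u' r| ≤ L * |s - r|)
    (hzero : ∀ s ∈ Icc a b, u s = 0 → u' s = 0) (ha : u a = 0) (hb : u b = 0)
    {t : ℝ} (ht : t ∈ Icc a b) (hut : 0 < u t) :
    u' t ^ 2 ≤ 4 * L * u t := by
  rcases eq_or_ne (u' t) 0 with h0 | h0
  · rw [h0, zero_pow two_ne_zero]; positivity
  -- Step back from `t` against the slope by `u' t / (2L)`: the Lipschitz bound forbids a zero of
  -- `u` on the way, and the second order Taylor bound at the landing point gives the claim.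
  set y := t - u' t / (2 * L) with hy_def
  have hyt : L * |t - y| = |u' t| / 2 := by
    rw [hy_def, sub_sub_cancel, abs_div, abs_of_pos (by positivity : 0 < 2 * L)]
    field_simp
  have hno_zero : ∀ s ∈ uIcc t y ∩ Icc a b, u s ≠ 0 := by
    rintro s ⟨hs, hsab⟩ hus
    have : |u' t| ≤ |u' t| / 2 := by
      calc |u' t| = |u' t - u' s| := by rw [hzero s hsab hus, sub_zero]
        _ ≤ L * |t - s| := hLip t ht s hsab
        _ ≤ L * |t - y| := by
          rw [abs_sub_comm t s, abs_sub_comm t y]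
          exact mul_le_mul_of_nonneg_left (abs_sub_left_of_mem_uIcc hs) hL.le
        _ = |u' t| / 2 := hyt
    exact h0 (abs_eq_zero.1 (by linarith [abs_nonneg (u' t)]))
  have hy : y ∈ Icc a b := by
    by_contra hy
    rcases not_and_or.1 hy with hya | hyb
    · exact hno_zero a ⟨⟨min_le_of_right_le (not_le.1 hya).le, le_max_of_le_left ht.1⟩,
        left_mem_Icc.2 (ht.1.trans ht.2)⟩ ha
    · exact hno_zero b ⟨⟨min_le_of_left_le ht.2, le_max_of_le_right (not_le.1 hyb).le⟩,
        right_mem_Icc.2 (ht.1.trans ht.2)⟩ hb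
  have hsub : uIcc t y ⊆ Icc a b := uIcc_subset_Icc ht hy
  have huy : 0 < u y := by
    by_contra! huy
    obtain ⟨s, hs, hus⟩ := intermediate_value_uIcc
      (fun s hs => (hu s (hsub hs)).continuousWithinAt.mono hsub)
      (mem_uIcc.2 (Or.inr ⟨huy, hut.le⟩) : (0 : ℝ) ∈ uIcc (u t) (u y))
    exact hno_zero s ⟨hs, hsub hs⟩ hus
  have htaylor := (abs_le.1 (abs_sub_sub_mul_le_of_lipschitz hL.le
    (fun s hs => (hu s (hsub hs)).mono hsub) (fun s hs => hLip s (hsub hs) t ht))).2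
  have hstep : 2 * L * (y - t) = -u' t := by
    rw [hy_def]
    field_simp
    ring
  linear_combination (4 * L) * htaylor + 4 * L * huy.le + (u' t + 2 * L * (y - t)) * hstep

theorem sq_deriv_le_abs (hL : 0 < L)
    (hu : ∀ s ∈ Icc a b, HasDerivWithinAt u (u' s) (Icc a b) s)
    (hLip : ∀ s ∈ Icc a b, ∀ r ∈ Icc a b, |u' s - u' r| ≤ L * |s - r|)
    (hzero : ∀ s ∈ Icc a b, u s = 0 → u' s = 0) (ha : u a = 0) (hb : u b = 0)
    {t : ℝ} (ht : t ∈ Icc a b) :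
    u' t ^ 2 ≤ 4 * L * |u t| := by
  rcases lt_trichotomy (u t) 0 with hneg | hzero_t | hpos
  · have := sq_deriv_le_of_pos (u := -u) (u' := -u') hL (fun s hs => (hu s hs).neg)
      (fun s hs r hr => by simpa only [Pi.neg_apply, ← neg_sub', abs_neg] using hLip s hs r hr)
      (fun s hs h => by simpa using hzero s hs (neg_eq_zero.1 h))
      (by simp [ha]) (by simp [hb]) ht (by simpa using hneg)
    simpa [abs_of_neg hneg] using this
  · rw [hzero t ht hzero_t, hzero_t]; simp
  · rw [abs_of_pos hpos]
    exact sq_deriv_le_of_pos hL hu hLip hzero ha hb ht hpos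

theorem abs_sqrt_abs_sub_le (hL : 0 ≤ L)
    (hu : ∀ s ∈ uIcc a b, HasDerivWithinAt u (u' s) (uIcc a b) s)
    (hne : ∀ s ∈ uIcc a b, u s ≠ 0) (hbound : ∀ s ∈ uIcc a b, u' s ^ 2 ≤ 4 * L * |u s|) :
    |√(|u b|) - √(|u a|)| ≤ √L * |b - a| := by
  have hder : ∀ s ∈ uIcc a b, HasDerivWithinAt (fun z => √|u z|)
      (SignType.sign (u s) * u' s / (2 * √|u s|)) (uIcc a b) s := fun s hs =>
    ((hasDerivAt_abs (hne s hs)).comp_hasDerivWithinAt s (hu s hs)).sqrt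
      (abs_ne_zero.2 (hne s hs))
  have hnorm : ∀ s ∈ uIcc a b, ‖SignType.sign (u s) * u' s / (2 * √|u s|)‖ ≤ √L := by
    intro s hs
    have hsqrt : 0 < √|u s| := Real.sqrt_pos.2 (abs_pos.2 (hne s hs))
    rw [Real.norm_eq_abs, abs_div, abs_mul, abs_of_pos (by positivity : 0 < 2 * √|u s|),
      div_le_iff₀ (by positivity)]
    rcases (hne s hs).lt_or_gt with h | h <;> simp only [h, sign_neg, sign_pos,
      SignType.coe_neg, SignType.coe_one, abs_neg, abs_one, one_mul]
    all_goals
      calc |u' s| ≤ √(4 * L * |u s|) := Real.abs_le_sqrt (hbound s hs)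
        _ = √L * (2 * √|u s|) := by
          rw [Real.sqrt_mul' _ (abs_nonneg _), Real.sqrt_mul' _ hL,
            show (4 : ℝ) = 2 ^ 2 by norm_num, Real.sqrt_sq zero_le_two]
          ring
  simpa only [Real.norm_eq_abs] using
    (convex_uIcc a b).norm_image_sub_le_of_norm_hasDerivWithin_le hder hnorm
      left_mem_uIcc right_mem_uIcc

end RealCalculus

section Sequences

variable {ℓ : ℕ → ℝ} {K : ℝ}

theorem le_two_mul_mul_of_le_mul_one_add {v : ℕ → ℝ} {n : ℕ} (hK : 0 ≤ K)
    (hv : ∀ k ≤ n, 0 < v k) (hvn : v n ≤ 1) (hrec : ∀ k < n, v (k + 1) ≤ v k * (1 + K * v k))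
    (hn : 1 ≤ n) : v n ≤ 2 * (1 + K) * n * v 0 := by
  have hinv : ∀ k ≤ n, (v 0)⁻¹ - K * k ≤ (v k)⁻¹ := by
    intro k
    induction k with
    | zero => simp
    | succ k ih =>
      intro hk
      have hvk := hv k (by omega)
      have hstep : (v k)⁻¹ - K ≤ (v (k + 1))⁻¹ :=
        calc (v k)⁻¹ - K ≤ (v k * (1 + K * v k))⁻¹ := by
              have : (v k * (1 + K * v k))⁻¹ - ((v k)⁻¹ - K) = K ^ 2 * v k / (1 + K * v k) := by
                field_simp
                ring
              have : 0 ≤ K ^ 2 * v k / (1 + K * v k) := by positivity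
              linarith
          _ ≤ (v (k + 1))⁻¹ := inv_anti₀ (hv (k + 1) hk) (hrec k hk)
      push_cast
      linarith [ih (by omega)]
  have hv0 := hv 0 (Nat.zero_le n)
  have hn' : (1 : ℝ) ≤ n := by exact_mod_cast hn
  by_cases hsmall : 2 * K * n * v 0 ≤ 1
  · have hhalf : (v 0)⁻¹ / 2 ≤ (v n)⁻¹ := by
      have : (v 0)⁻¹ / 2 - K * n = (1 - 2 * K * n * v 0) / (2 * v 0) := by
        field_simp
      have : 0 ≤ (1 - 2 * K * n * v 0) / (2 * v 0) := div_nonneg (by linarith) (by positivity)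
      linarith [hinv n le_rfl]
    have : v n ≤ 2 * v 0 := by
      have := inv_anti₀ (by positivity) hhalf
      rwa [inv_inv, inv_div, div_inv_eq_mul] at this
    have : 1 ≤ (1 + K) * n := by nlinarith
    nlinarith
  · nlinarith

theorem le_sq_mul_of_abs_sqrt_sub_le (hK : 0 ≤ K) (hℓ : ∀ k, 0 < ℓ k) (hℓ1 : ∀ k, ℓ k ≤ 1)
    (hstep : ∀ k, |√(ℓ (k + 1)) - √(ℓ k)| ≤ K * ℓ k) {n : ℕ} (hn : 1 ≤ n) :
    ℓ n ≤ (2 * (1 + K) * n) ^ 2 * ℓ 0 := by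
  have hv := le_two_mul_mul_of_le_mul_one_add (v := fun k => √(ℓ k)) hK
    (fun k _ => Real.sqrt_pos.2 (hℓ k)) (Real.sqrt_le_one.2 (hℓ1 n))
    (fun k _ => by
      have e : √(ℓ k) * (1 + K * √(ℓ k)) = √(ℓ k) + K * ℓ k := by
        linear_combination K * Real.mul_self_sqrt (hℓ k).le
      linarith [(abs_le.1 (hstep k)).2]) hn
  have := pow_le_pow_left₀ (Real.sqrt_nonneg _) hv 2
  rwa [mul_pow, Real.sq_sqrt (hℓ n).le, Real.sq_sqrt (hℓ 0).le] at this

theorem le_sq_mul_of_abs_sqrt_sub_le_of_mul_le {δ : ℝ} (hK : 0 ≤ K) (hδ : 0 < δ)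
    (hℓ : ∀ k, 0 < ℓ k) (hℓ1 : ∀ k, ℓ k ≤ 1) (hstep : ∀ k, |√(ℓ (k + 1)) - √(ℓ k)| ≤ K * ℓ k)
    (hgrow : ∀ k, δ * ℓ k ≤ ℓ (k + 1)) {n : ℕ} (hn : 1 ≤ n) :
    ℓ 0 ≤ (2 * (1 + K / δ) * n) ^ 2 * ℓ n := by
  -- Run the forward estimate on the reversed sequence, where `δ` converts `ℓ k` into `ℓ (k + 1)`.
  have hv := le_two_mul_mul_of_le_mul_one_add (v := fun j => √(ℓ (n - j))) (n := n)
    (div_nonneg hK hδ.le) (fun j _ => Real.sqrt_pos.2 (hℓ _))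
    (Real.sqrt_le_one.2 (hℓ1 _))
    (fun j hj => by
      have hk : n - j = n - (j + 1) + 1 := by omega
      simp only [hk]
      generalize n - (j + 1) = k
      have h1 := (abs_le.1 (hstep k)).1
      have h2 : K * ℓ k ≤ K / δ * ℓ (k + 1) := by
        rw [div_mul_eq_mul_div, le_div_iff₀ hδ, mul_assoc, mul_comm (ℓ k)]
        exact mul_le_mul_of_nonneg_left (hgrow k) hK
      have e : √(ℓ (k + 1)) * (1 + K / δ * √(ℓ (k + 1))) = √(ℓ (k + 1)) + K / δ * ℓ (k + 1) := by
        linear_combination K / δ * Real.mul_self_sqrt (hℓ (k + 1)).le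
      linarith) hn
  have := pow_le_pow_left₀ (Real.sqrt_nonneg _) hv 2
  simp only [Nat.sub_self, Nat.sub_zero] at this
  rwa [mul_pow, Real.sq_sqrt (hℓ n).le, Real.sq_sqrt (hℓ 0).le] at this

theorem div_le_sq_and_div_le_sq_of_abs_sqrt_sub_le {δ : ℝ} (hK : 0 ≤ K) (hδ : 0 < δ)
    (hℓ : ∀ k, 0 < ℓ k) (hℓ1 : ∀ k, ℓ k ≤ 1) (hstep : ∀ k, |√(ℓ (k + 1)) - √(ℓ k)| ≤ K * ℓ k)
    (hgrow : ∀ k, δ * ℓ k ≤ ℓ (k + 1)) {n : ℕ} (hn : 1 ≤ n) :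
    ℓ n / ℓ 0 ≤ (2 * (1 + K + K / δ) * n) ^ 2 ∧ ℓ 0 / ℓ n ≤ (2 * (1 + K + K / δ) * n) ^ 2 := by
  have hKδ := div_nonneg hK hδ.le
  constructor
  · rw [div_le_iff₀ (hℓ 0)]
    refine (le_sq_mul_of_abs_sqrt_sub_le hK hℓ hℓ1 hstep hn).trans
      (mul_le_mul_of_nonneg_right (pow_le_pow_left₀ (by positivity) ?_ 2) (hℓ 0).le)
    exact mul_le_mul_of_nonneg_right (by linarith) n.cast_nonneg
  · rw [div_le_iff₀ (hℓ n)]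
    refine (le_sq_mul_of_abs_sqrt_sub_le_of_mul_le hK hδ hℓ hℓ1 hstep hgrow hn).trans
      (mul_le_mul_of_nonneg_right (pow_le_pow_left₀ (by positivity) ?_ 2) (hℓ n).le)
    exact mul_le_mul_of_nonneg_right (by linarith) n.cast_nonneg

end Sequences

theorem prod_div_prod_le_exp {ι : Type*} {s : Finset ι} {a b c : ι → ℝ} {δ : ℝ} (hδ : 0 < δ)
    (ha : ∀ i ∈ s, 0 ≤ a i) (hb : ∀ i ∈ s, δ ≤ b i) (habc : ∀ i ∈ s, |a i - b i| ≤ c i) :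
    (∏ i ∈ s, a i) / ∏ i ∈ s, b i ≤ Real.exp ((∑ i ∈ s, c i) / δ) := by
  rw [← Finset.prod_div_distrib, Finset.sum_div, Real.exp_sum]
  refine Finset.prod_le_prod (fun i hi => div_nonneg (ha i hi) (hδ.trans_le (hb i hi)).le)
    fun i hi => ?_
  have hbi := hδ.trans_le (hb i hi)
  calc a i / b i = (a i - b i) / b i + 1 := by field_simp; ring
    _ ≤ c i / b i + 1 := by gcongr; exact (le_abs_self _).trans (habc i hi)
    _ ≤ c i / δ + 1 := by gcongr; exacts [(abs_nonneg _).trans (habc i hi), hb i hi]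
    _ ≤ Real.exp (c i / δ) := Real.add_one_le_exp _

theorem sum_abs_sub_eq_abs_sub_of_mul_pos {x : ℕ → ℝ}
    (h : ∀ k, 0 < (x (k + 1) - x k) * (x 1 - x 0)) (m : ℕ) :
    ∑ k ∈ Finset.range m, |x (k + 1) - x k| = |x m - x 0| := by
  rw [← Finset.sum_range_sub x m]
  have h0 : x 1 - x 0 ≠ 0 := fun h0 => by simpa [h0] using h 0
  rcases h0.lt_or_gt with hneg | hpos
  · rw [← abs_neg, ← Finset.sum_neg_distrib,
      Finset.abs_sum_of_nonneg fun k _ => (neg_pos.2 (neg_of_mul_pos_left (h k) hneg.le)).le]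
    exact Finset.sum_congr rfl fun k _ => abs_of_neg (neg_of_mul_pos_left (h k) hneg.le)
  · rw [Finset.abs_sum_of_nonneg fun k _ => (pos_of_mul_pos_left (h k) hpos.le).le]
    exact Finset.sum_congr rfl fun k _ => abs_of_pos (pos_of_mul_pos_left (h k) hpos.le)

noncomputable def growthConst (δ K L : ℝ) : ℝ :=
  Real.exp (L / δ) * (2 * (1 + K + K / δ)) ^ 2

theorem one_le_growthConst {δ K L : ℝ} (hδ : 0 < δ) (hK : 0 ≤ K) (hL : 0 ≤ L) :
    1 ≤ growthConst δ K L := by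
  have hexp : 1 ≤ Real.exp (L / δ) := Real.one_le_exp (div_nonneg hL hδ.le)
  have hsq : 1 ≤ (2 * (1 + K + K / δ)) ^ 2 :=
    one_le_pow₀ (by linarith [div_nonneg hK hδ.le])
  exact one_le_mul_of_one_le_of_one_le hexp hsq

theorem prod_le_and_inv_prod_le {a b ℓ : ℕ → ℝ} {δ L K : ℝ} (hδ : 0 < δ) (hL : 0 ≤ L)
    (hK : 0 ≤ K) (ha : ∀ k, δ ≤ a k) (hb : ∀ k, δ ≤ b k) (hab : ∀ k, |a k - b k| ≤ L * ℓ k)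
    (hℓ : ∀ k, 0 < ℓ k) (hmul : ∀ k, ℓ (k + 1) = b k * ℓ k)
    (hsum : ∀ m, ∑ k ∈ Finset.range m, ℓ k ≤ 1)
    (hstep : ∀ k, |√(ℓ (k + 1)) - √(ℓ k)| ≤ K * ℓ k) {n : ℕ} (hn : 1 ≤ n) :
    ∏ k ∈ Finset.range n, a k ≤ growthConst δ K L * n ^ 2 ∧
      (∏ k ∈ Finset.range n, a k)⁻¹ ≤ growthConst δ K L * n ^ 2 := by
  have hℓ1 : ∀ k, ℓ k ≤ 1 := fun k =>
    (Finset.single_le_sum (fun j _ => (hℓ j).le) (Finset.self_mem_range_succ k)).trans (hsum _)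
  have hprod_b : ∀ m, (∏ k ∈ Finset.range m, b k) * ℓ 0 = ℓ m := by
    intro m
    induction m with
    | zero => simp
    | succ m ih => rw [Finset.prod_range_succ, hmul, ← ih]; ring
  set P := ∏ k ∈ Finset.range n, a k
  set Q := ℓ n / ℓ 0
  have hprod_eq : ∏ k ∈ Finset.range n, b k = Q := eq_div_of_mul_eq (hℓ 0).ne' (hprod_b n)
  have hP : 0 < P := Finset.prod_pos fun k _ => hδ.trans_le (ha k)
  have hQ : 0 < Q := div_pos (hℓ n) (hℓ 0)
  have hexp : (∑ k ∈ Finset.range n, L * ℓ k) / δ ≤ L / δ := by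
    rw [← Finset.mul_sum]
    gcongr
    exact mul_le_of_le_one_right hL (hsum n)
  have hPQ : P / Q ≤ Real.exp (L / δ) := by
    rw [← hprod_eq]
    exact (prod_div_prod_le_exp hδ (fun k _ => hδ.le.trans (ha k)) (fun k _ => hb k)
      fun k _ => hab k).trans (Real.exp_le_exp.2 hexp)
  have hQP : Q / P ≤ Real.exp (L / δ) := by
    rw [← hprod_eq]
    exact (prod_div_prod_le_exp hδ (fun k _ => hδ.le.trans (hb k)) (fun k _ => ha k)
      fun k _ => abs_sub_comm (a k) (b k) ▸ hab k).trans (Real.exp_le_exp.2 hexp)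
  obtain ⟨hQ_le, hQinv_le⟩ := div_le_sq_and_div_le_sq_of_abs_sqrt_sub_le hK hδ hℓ hℓ1 hstep
    (fun k => hmul k ▸ mul_le_mul_of_nonneg_right (hb k) (hℓ k).le) hn
  rw [← inv_div] at hQinv_le
  constructor
  · calc P = P / Q * Q := by field_simp
      _ ≤ Real.exp (L / δ) * (2 * (1 + K + K / δ) * n) ^ 2 :=
        mul_le_mul hPQ hQ_le hQ.le (Real.exp_pos _).le
      _ = _ := by rw [growthConst]; ring
  · calc P⁻¹ = Q / P * Q⁻¹ := by field_simp
      _ ≤ Real.exp (L / δ) * (2 * (1 + K + K / δ) * n) ^ 2 :=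
        mul_le_mul hQP hQinv_le (inv_pos.2 hQ).le (Real.exp_pos _).le
      _ = _ := by rw [growthConst]; ring

structure IsParabolicC11 (f f' : ℝ → ℝ) (δ L : ℝ) : Prop where
  mapsTo : MapsTo f 𝕀 𝕀
  hasDerivWithinAt : ∀ t ∈ 𝕀, HasDerivWithinAt f (f' t) 𝕀 t
  δ_pos : 0 < δ
  le_deriv : ∀ t ∈ 𝕀, δ ≤ f' t
  L_pos : 0 < L
  lipschitz : ∀ s ∈ 𝕀, ∀ t ∈ 𝕀, |f' s - f' t| ≤ L * |s - t|
  deriv_eq_one_of_fixed : ∀ t ∈ 𝕀, f t = t → f' t = 1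
  map_zero : f 0 = 0
  map_one : f 1 = 1

namespace IsParabolicC11

variable {f f' : ℝ → ℝ} {δ L : ℝ}

theorem sq_deriv_sub_one_le (hf : IsParabolicC11 f f' δ L) {t : ℝ} (ht : t ∈ 𝕀) :
    (f' t - 1) ^ 2 ≤ 4 * L * |f t - t| :=
  sq_deriv_le_abs (u := fun s => f s - s) hf.L_pos
    (fun s hs => (hf.hasDerivWithinAt s hs).sub (hasDerivWithinAt_id s _))
    (fun s hs r hr => by rw [sub_sub_sub_cancel_right]; exact hf.lipschitz s hs r hr)
    (fun s hs h => by rw [hf.deriv_eq_one_of_fixed s hs (sub_eq_zero.1 h), sub_self])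
    (by simp [hf.map_zero]) (by simp [hf.map_one]) ht

theorem exists_mem_uIcc_sub_eq_mul_sub (hf : IsParabolicC11 f f' δ L) {a b : ℝ} (ha : a ∈ 𝕀)
    (hb : b ∈ 𝕀) : ∃ c ∈ uIcc a b, f b - f a = f' c * (b - a) :=
  _root_.exists_mem_uIcc_sub_eq_mul_sub fun s hs =>
    (hf.hasDerivWithinAt s (uIcc_subset_Icc ha hb hs)).mono (uIcc_subset_Icc ha hb)

theorem apply_ne_of_mem_uIcc (hf : IsParabolicC11 f f' δ L) {x s : ℝ} (hx : x ∈ 𝕀)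
    (hfx : f x ≠ x) (hs : s ∈ uIcc x (f x)) : f s ≠ s := by
  intro hfs
  have hsI : s ∈ 𝕀 := uIcc_subset_Icc hx (hf.mapsTo hx) hs
  obtain ⟨c, hc, h⟩ := hf.exists_mem_uIcc_sub_eq_mul_sub hx hsI
  have hc_pos : 0 < f' c := hf.δ_pos.trans_le (hf.le_deriv c (uIcc_subset_Icc hx hsI hc))
  have hsx : s - x ≠ 0 := sub_ne_zero.2 fun h => hfx (h ▸ hfs)
  -- `s - f x = f' c * (s - x)` has the sign of `s - x`, so `s` is not between `x` and `f x`.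
  have hbetween : (s - x) * (s - f x) ≤ 0 := by
    rcases mem_uIcc.1 hs with ⟨h1, h2⟩ | ⟨h1, h2⟩ <;> nlinarith
  rw [hfs] at h
  have : (s - x) * (s - f x) = f' c * (s - x) ^ 2 := by rw [h]; ring
  have : 0 < f' c * (s - x) ^ 2 := mul_pos hc_pos (sq_pos_of_ne_zero hsx)
  linarith

theorem abs_sqrt_sub_le (hf : IsParabolicC11 f f' δ L) {y : ℝ} (hy : y ∈ 𝕀) (hfy : f y ≠ y) :
    |√(|f (f y) - f y|) - √(|f y - y|)| ≤ √L * |f y - y| := by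
  have hsub : uIcc y (f y) ⊆ 𝕀 := uIcc_subset_Icc hy (hf.mapsTo hy)
  exact abs_sqrt_abs_sub_le (u := fun s => f s - s) (u' := fun s => f' s - 1) hf.L_pos.le
    (fun s hs => ((hf.hasDerivWithinAt s (hsub hs)).sub (hasDerivWithinAt_id s _)).mono hsub)
    (fun s hs => sub_ne_zero.2 (hf.apply_ne_of_mem_uIcc hy hfy hs))
    (fun s hs => hf.sq_deriv_sub_one_le (hsub hs))

theorem iterate_succ_sub_mul_pos (hf : IsParabolicC11 f f' δ L) {x : ℝ} (hx : x ∈ 𝕀)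
    (hfx : f x ≠ x) (k : ℕ) : 0 < (f^[k + 1] x - f^[k] x) * (f x - x) := by
  induction k with
  | zero => simpa using mul_self_pos.2 (sub_ne_zero.2 hfx)
  | succ k ih =>
    have hmem : ∀ j, f^[j] x ∈ 𝕀 := fun j => hf.mapsTo.iterate j hx
    obtain ⟨c, hc, h⟩ := hf.exists_mem_uIcc_sub_eq_mul_sub (hmem k) (hmem (k + 1))
    simp only [← Function.iterate_succ_apply' f] at h
    rw [h, mul_assoc]
    exact mul_pos (hf.δ_pos.trans_le (hf.le_deriv c (uIcc_subset_Icc (hmem k) (hmem _) hc))) ih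

theorem prod_deriv_iterate_le (hf : IsParabolicC11 f f' δ L) {x : ℝ} (hx : x ∈ 𝕀) {n : ℕ}
    (hn : 1 ≤ n) :
    ∏ k ∈ Finset.range n, f' (f^[k] x) ≤ growthConst δ √L L * n ^ 2 ∧
      (∏ k ∈ Finset.range n, f' (f^[k] x))⁻¹ ≤ growthConst δ √L L * n ^ 2 := by
  have hmem : ∀ k, f^[k] x ∈ 𝕀 := fun k => hf.mapsTo.iterate k hx
  have hsucc : ∀ k, f^[k + 1] x = f (f^[k] x) := fun k => Function.iterate_succ_apply' f k x
  rcases eq_or_ne (f x) x with hfix | hmove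
  · have hD : 1 ≤ growthConst δ √L L * n ^ 2 :=
      one_le_mul_of_one_le_of_one_le
        (one_le_growthConst hf.δ_pos (Real.sqrt_nonneg L) hf.L_pos.le)
        (one_le_pow₀ (by exact_mod_cast hn))
    simp only [Function.iterate_fixed hfix, hf.deriv_eq_one_of_fixed x hx hfix,
      Finset.prod_const_one, inv_one]
    exact ⟨hD, hD⟩
  have hsign := hf.iterate_succ_sub_mul_pos hx hmove
  have hne : ∀ k, f (f^[k] x) ≠ f^[k] x := fun k h =>
    (hsign k).ne' (by rw [hsucc, h, sub_self, zero_mul])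
  choose η hη hstep using fun k => hf.exists_mem_uIcc_sub_eq_mul_sub (hmem k) (hmem (k + 1))
  simp only [← hsucc] at hstep
  have hηI : ∀ k, η k ∈ 𝕀 := fun k => uIcc_subset_Icc (hmem k) (hmem (k + 1)) (hη k)
  refine prod_le_and_inv_prod_le (b := fun k => f' (η k))
    (ℓ := fun k => |f^[k + 1] x - f^[k] x|) hf.δ_pos hf.L_pos.le (Real.sqrt_nonneg L)
    (fun k => hf.le_deriv _ (hmem k)) (fun k => hf.le_deriv _ (hηI k)) (fun k => ?_)
    (fun k => ?_) (fun k => ?_) (fun m => ?_) (fun k => ?_) hn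
  · refine (hf.lipschitz _ (hmem k) _ (hηI k)).trans (mul_le_mul_of_nonneg_left ?_ hf.L_pos.le)
    rw [abs_sub_comm]
    exact abs_sub_left_of_mem_uIcc (hη k)
  · exact abs_pos.2 (sub_ne_zero.2 (hsucc k ▸ hne k))
  · rw [hstep, abs_mul, abs_of_pos (hf.δ_pos.trans_le (hf.le_deriv _ (hηI k)))]
  · rw [sum_abs_sub_eq_abs_sub_of_mul_pos (x := fun k => f^[k] x) hsign]
    exact abs_sub_le_iff.2
      ⟨by linarith [(hmem m).2, (hmem 0).1], by linarith [(hmem m).1, (hmem 0).2]⟩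
  · simpa only [hsucc] using hf.abs_sqrt_sub_le (hmem k) (hne k)

end IsParabolicC11

section Iterates

variable {𝕜 : Type*} [NontriviallyNormedField 𝕜] {s : Set 𝕜}

theorem hasDerivWithinAt_iterate {f f' : 𝕜 → 𝕜} (hs : MapsTo f s s)
    (hf : ∀ t ∈ s, HasDerivWithinAt f (f' t) s t) (n : ℕ) {x : 𝕜} (hx : x ∈ s) :
    HasDerivWithinAt f^[n] (∏ k ∈ Finset.range n, f' (f^[k] x)) s x := by
  induction n generalizing x with
  | zero => simpa using hasDerivWithinAt_id x s
  | succ n ih =>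
    rw [Function.iterate_succ, Finset.prod_range_succ']
    simpa only [Function.iterate_succ_apply, Function.iterate_zero_apply] using
      (ih (hs hx)).comp x (hf x hx) hs

theorem ContDiffOn.iterate {n : WithTop ℕ∞} {f : 𝕜 → 𝕜} (hf : ContDiffOn 𝕜 n f s)
    (hs : MapsTo f s s) (k : ℕ) : ContDiffOn 𝕜 n f^[k] s := by
  induction k with
  | zero => exact contDiffOn_id
  | succ k ih => rw [Function.iterate_succ]; exact ih.comp hf hs

theorem derivWithin_apply_mul_derivWithin_eq_one {F G : 𝕜 → 𝕜} (hs : UniqueDiffOn 𝕜 s)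
    (hG : MapsTo G s s) (hFG : LeftInvOn F G s) (hFd : DifferentiableOn 𝕜 F s)
    (hGd : DifferentiableOn 𝕜 G s) {z : 𝕜} (hz : z ∈ s) :
    derivWithin F s (G z) * derivWithin G s z = 1 := by
  have hcomp := ((hFd (G z) (hG hz)).hasDerivWithinAt.comp z (hGd z hz).hasDerivWithinAt hG)
  exact (hs z hz).eq_deriv s (hcomp.congr (fun t ht => (hFG ht).symm) (hFG hz).symm)
    (hasDerivWithinAt_id z s)

end Iterates

theorem Set.LeftInvOn.iterate {α : Type*} {f g : α → α} {s : Set α} (h : LeftInvOn f g s)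
    (hg : MapsTo g s s) (n : ℕ) : LeftInvOn f^[n] g^[n] s := by
  induction n with
  | zero => exact fun _ _ => rfl
  | succ n ih =>
    intro x hx
    rw [Function.iterate_succ_apply, Function.iterate_succ_apply', h (hg.iterate n hx), ih hx]

theorem le_one_of_pow_le_of_tendsto {Γ : ℕ → ℝ} {m : ℝ}
    (hΓ : Tendsto (fun n : ℕ => Γ n ^ (1 / (n : ℝ))) atTop (𝓝 1)) (hm : 0 ≤ m)
    (h : ∀ n, m ^ n ≤ Γ n) : m ≤ 1 :=
  ge_of_tendsto hΓ <| (eventually_ge_atTop 1).mono fun n hn => by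
    change m ≤ Γ n ^ (1 / (n : ℝ))
    rw [one_div, ← Real.pow_rpow_inv_natCast hm (by omega : n ≠ 0)]
    exact Real.rpow_le_rpow (by positivity) (h n) (by positivity)

theorem supAbsDeriv_le {F : ℝ → ℝ} {B : ℝ} (hB : 0 ≤ B)
    (h : ∀ x ∈ 𝕀, |derivWithin F 𝕀 x| ≤ B) : supAbsDeriv F ≤ B :=
  Real.sSup_le (by rintro _ ⟨x, hx, rfl⟩; exact h x hx) hB

theorem abs_derivWithin_le_supAbsDeriv {F : ℝ → ℝ} (hF : ContDiffOn ℝ 1 F 𝕀) {x : ℝ}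
    (hx : x ∈ 𝕀) : |derivWithin F 𝕀 x| ≤ supAbsDeriv F :=
  le_csSup (isCompact_Icc.image_of_continuousOn
    (hF.continuousOn_derivWithin (uniqueDiffOn_Icc zero_lt_one) le_rfl).abs).bddAbove
    (mem_image_of_mem _ hx)

namespace IsDiff01

variable {f g : ℝ → ℝ}

theorem hasDerivWithinAt (hf : IsDiff01 f g) {t : ℝ} (ht : t ∈ 𝕀) :
    HasDerivWithinAt f (derivWithin f 𝕀 t) 𝕀 t :=
  (hf.contDiffOn.differentiableOn one_ne_zero t ht).hasDerivWithinAt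

theorem derivWithin_iterate (hf : IsDiff01 f g) (n : ℕ) {x : ℝ} (hx : x ∈ 𝕀) :
    derivWithin f^[n] 𝕀 x = ∏ k ∈ Finset.range n, derivWithin f 𝕀 (f^[k] x) :=
  (hasDerivWithinAt_iterate hf.mapsTo (fun _ ht => hf.hasDerivWithinAt ht) n hx).derivWithin
    (uniqueDiffOn_Icc zero_lt_one x hx)

theorem derivWithin_inv_iterate (hf : IsDiff01 f g) (n : ℕ) {y : ℝ} (hy : y ∈ 𝕀) :
    derivWithin g^[n] 𝕀 y = (derivWithin f^[n] 𝕀 (g^[n] y))⁻¹ :=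
  eq_inv_of_mul_eq_one_right <| derivWithin_apply_mul_derivWithin_eq_one
    (uniqueDiffOn_Icc zero_lt_one) (hf.inv_mapsTo.iterate n)
    (LeftInvOn.iterate (fun x hx => hf.right_inv x hx) hf.inv_mapsTo n)
    ((hf.contDiffOn.iterate hf.mapsTo n).differentiableOn one_ne_zero)
    ((hf.inv_contDiffOn.iterate hf.inv_mapsTo n).differentiableOn one_ne_zero) hy

theorem gamma_le (hf : IsDiff01 f g) {n : ℕ} {B : ℝ}
    (h : ∀ x ∈ 𝕀, ∏ k ∈ Finset.range n, derivWithin f 𝕀 (f^[k] x) ≤ B ∧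
      (∏ k ∈ Finset.range n, derivWithin f 𝕀 (f^[k] x))⁻¹ ≤ B) :
    Gamma f g n ≤ B := by
  have hpos : ∀ x ∈ 𝕀, 0 < ∏ k ∈ Finset.range n, derivWithin f 𝕀 (f^[k] x) := fun x hx =>
    Finset.prod_pos fun k _ => hf.deriv_pos _ (hf.mapsTo.iterate k hx)
  have h0 : (0 : ℝ) ∈ 𝕀 := left_mem_Icc.2 zero_le_one
  have hB : 0 ≤ B := (inv_pos.2 (hpos 0 h0)).le.trans (h 0 h0).2
  refine max_le (supAbsDeriv_le hB fun x hx => ?_) (supAbsDeriv_le hB fun y hy => ?_)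
  · rw [hf.derivWithin_iterate n hx, abs_of_pos (hpos x hx)]
    exact (h x hx).1
  · have hx := hf.inv_mapsTo.iterate n hy
    rw [hf.derivWithin_inv_iterate n hy, hf.derivWithin_iterate n hx,
      abs_of_pos (inv_pos.2 (hpos _ hx))]
    exact (h _ hx).2

theorem derivWithin_eq_one_of_fixed (hf : IsDiff01 f g) (hγ : GammaEqOne f g) {p : ℝ}
    (hp : p ∈ 𝕀) (hfp : f p = p) : derivWithin f 𝕀 p = 1 := by
  set c := derivWithin f 𝕀 p
  have hc : 0 < c := hf.deriv_pos p hp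
  have hfn : ∀ n, derivWithin f^[n] 𝕀 p = c ^ n := fun n =>
    ((hf.hasDerivWithinAt hp).iterate p hfp hf.mapsTo n).derivWithin
      (uniqueDiffOn_Icc zero_lt_one p hp)
  have hgp : g p = p := by simpa [hfp] using hf.left_inv p hp
  have hle : c ≤ 1 := le_one_of_pow_le_of_tendsto hγ hc.le fun n =>
    calc c ^ n = |derivWithin f^[n] 𝕀 p| := by rw [hfn, abs_of_pos (pow_pos hc n)]
      _ ≤ supAbsDeriv f^[n] :=
        abs_derivWithin_le_supAbsDeriv (hf.contDiffOn.iterate hf.mapsTo n) hp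
      _ ≤ Gamma f g n := le_max_left _ _
  have hge : c⁻¹ ≤ 1 := le_one_of_pow_le_of_tendsto hγ (inv_pos.2 hc).le fun n =>
    calc c⁻¹ ^ n = |derivWithin g^[n] 𝕀 p| := by
          rw [hf.derivWithin_inv_iterate n hp, Function.iterate_fixed hgp, hfn, inv_pow,
            abs_of_pos (inv_pos.2 (pow_pos hc n))]
      _ ≤ supAbsDeriv g^[n] :=
        abs_derivWithin_le_supAbsDeriv (hf.inv_contDiffOn.iterate hf.inv_mapsTo n) hp
      _ ≤ Gamma f g n := le_max_right _ _
  exact le_antisymm hle ((inv_le_one₀ hc).1 hge)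

theorem exists_isParabolicC11 (hf : IsDiff01 f g) (hC2 : ContDiffOn ℝ 2 f 𝕀)
    (hγ : GammaEqOne f g) : ∃ δ L, IsParabolicC11 f (derivWithin f 𝕀) δ L := by
  have hC1 : ContDiffOn ℝ 1 (derivWithin f 𝕀) 𝕀 :=
    hC2.derivWithin (uniqueDiffOn_Icc zero_lt_one) (by norm_num)
  obtain ⟨z, hz, hmin⟩ :=
    isCompact_Icc.exists_isMinOn (nonempty_Icc.2 zero_le_one) hC1.continuousOn
  obtain ⟨K, hK⟩ := hC1.exists_lipschitzOnWith one_ne_zero (convex_Icc 0 1) isCompact_Icc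
  refine ⟨derivWithin f 𝕀 z, K + 1,
    { mapsTo := hf.mapsTo
      hasDerivWithinAt := fun _ ht => hf.hasDerivWithinAt ht
      δ_pos := hf.deriv_pos z hz
      le_deriv := fun _ ht => hmin ht
      L_pos := by positivity
      lipschitz := fun s hs t ht => ?_
      deriv_eq_one_of_fixed := fun _ hp => hf.derivWithin_eq_one_of_fixed hγ hp
      map_zero := hf.map_zero
      map_one := hf.map_one }⟩
  have := hK.dist_le_mul s hs t ht
  rw [Real.dist_eq, Real.dist_eq] at this
  exact this.trans (mul_le_mul_of_nonneg_right (by linarith) (abs_nonneg _))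

end IsDiff01

/-- **Theorem 2 (Polterovich–Sodin).** If `f ∈ Diff₀[0,1]` is `C²`-smooth and `γ(f) = 1`,
then `Γ_n(f) ≤ C(f) · n²` for all `n ∈ ℕ`. -/
theorem growth_gap_C2 (f g : ℝ → ℝ) (hf : IsDiff01 f g)
    (hC2 : ContDiffOn ℝ 2 f (Set.Icc (0:ℝ) 1))
    (hγ : GammaEqOne f g) :
    ∃ C > 0, ∀ n : ℕ, 1 ≤ n → Gamma f g n ≤ C * (n:ℝ) ^ 2 := by
  obtain ⟨δ, L, hpar⟩ := hf.exists_isParabolicC11 hC2 hγ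
  refine ⟨growthConst δ √L L,
    one_pos.trans_le (one_le_growthConst hpar.δ_pos (Real.sqrt_nonneg L) hpar.L_pos.le),
    fun n hn => hf.gamma_le fun x hx => hpar.prod_deriv_iterate_le hx hn⟩
end

section
/- Let ω : [0,1] → [0,∞) be a modulus of continuity such that: for each 0 < α < 1 there exists 0 < a(α) < 1 such that x ↦ ω(x)/x^α is increasing on (0, a(α)]; x ↦ ω(x)/x is decreasing on (0,1]; and lim_{x→0⁺} ω(x)/(x·log(e/x)) = 0 (in particular ω is strictly increasing, so its inverse ω^{-1} is defined). Then there exist f ∈ Diff₀^ω[0,1] with γ(f) = 1 and a constant c(f) > 0 such that for every ε > 0 there is N with log Γ_n(f) ≥ (1−ε) · log( n / ω^{-1}(c(f)/n) ) for all n ≥ N. -/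
open Set Filter

/-!
The diffeomorphism is the time-one map `f = tanFlow 1` of the flow on `[0,1]` obtained by
conjugating the translations of `ℝ` with `x ↦ tan (π x - π / 2)`. Then `fⁿ = tanFlow n`,
whose derivative has maximum between `1 + n²` and `2 (1 + n²)`, so `Γ_n(f) ≍ n²` and
`γ(f) = 1`. The derivative of `f` is Lipschitz, and `ω d ≥ ω 1 · d` because `ω x / x` is
decreasing, so `f ∈ Diff₀^ω[0,1]`. Finally `ω x ≤ x log (e / x)` near `0` forces the
solution `x` of `ω x = ω 1 / n` to be at least `n^{-(1+ε)}` for large `n`, whence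
`log (n / ω⁻¹(ω 1 / n)) ≤ (2 + ε) log n`, while `log Γ_n(f) ≥ 2 log n`.
-/

open Real hiding Gamma
open scoped Topology

lemma arctan_div_pi_mem_Ioo (y : ℝ) : arctan y / π ∈ Ioo (-(1 / 2) : ℝ) (1 / 2) := by
  have h₁ := arctan_lt_pi_div_two y
  have h₂ := neg_pi_div_two_lt_arctan y
  constructor
  · rw [lt_div_iff₀ pi_pos]; linarith
  · rw [div_lt_iff₀ pi_pos]; linarith

lemma one_half_sub_arctan_div_pi_mem_Icc (t : ℝ) : 1 / 2 - arctan t / π ∈ Icc (0 : ℝ) 1 := by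
  have := arctan_div_pi_mem_Ioo t
  constructor <;> linarith [this.1, this.2]

-- `(s, t s - c)` is the image of the unit vector `(s, c)` under a matrix of determinant `-1`
-- and squared Frobenius norm `2 + t²`, so it is at least `(2 + t²)^{-1/2}` long.
lemma one_le_two_mul_one_add_sq_mul {s c : ℝ} (t : ℝ) (h : s ^ 2 + c ^ 2 = 1) :
    1 ≤ 2 * (1 + t ^ 2) * (s ^ 2 + (t * s - c) ^ 2) := by
  nlinarith [sq_nonneg s, sq_nonneg (t * s + (t * s - c)), sq_nonneg (t * (t * s - c))]

lemma hasDerivWithinAt_Icc_of_hasDerivAt_Ioo {f f' : ℝ → ℝ} {a b x : ℝ} (hab : a < b)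
    (hderiv : ∀ y ∈ Ioo a b, HasDerivAt f (f' y) y) (hf' : ContinuousOn f' (Icc a b))
    (ha : ContinuousWithinAt f (Ioi a) a) (hb : ContinuousWithinAt f (Iio b) b)
    (hx : x ∈ Icc a b) : HasDerivWithinAt f (f' x) (Icc a b) x := by
  have hdiff : DifferentiableOn ℝ f (Ioo a b) := fun y hy =>
    (hderiv y hy).differentiableAt.differentiableWithinAt
  have hderiv_eq : EqOn (deriv f) f' (Ioo a b) := fun y hy => (hderiv y hy).deriv
  rcases hx.1.eq_or_lt with rfl | hax
  · have hlim : Tendsto (deriv f) (𝓝[>] a) (𝓝 (f' a)) := by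
      rw [← nhdsWithin_Ioo_eq_nhdsGT hab]
      exact ((hf' a (left_mem_Icc.2 hab.le)).mono Ioo_subset_Icc_self).congr'
        (eventuallyEq_nhdsWithin_of_eqOn hderiv_eq).symm
    exact (hasDerivWithinAt_Ici_of_tendsto_deriv hdiff (ha.mono Ioo_subset_Ioi_self)
      (Ioo_mem_nhdsGT hab) hlim).mono Icc_subset_Ici_self
  rcases hx.2.eq_or_lt with rfl | hxb
  · have hlim : Tendsto (deriv f) (𝓝[<] x) (𝓝 (f' x)) := by
      rw [← nhdsWithin_Ioo_eq_nhdsLT hab]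
      exact ((hf' x (right_mem_Icc.2 hab.le)).mono Ioo_subset_Icc_self).congr'
        (eventuallyEq_nhdsWithin_of_eqOn hderiv_eq).symm
    exact (hasDerivWithinAt_Iic_of_tendsto_deriv hdiff (hb.mono Ioo_subset_Iio_self)
      (Ioo_mem_nhdsLT hab) hlim).mono Icc_subset_Iic_self
  exact (hderiv x ⟨hax, hxb⟩).hasDerivWithinAt

lemma tendsto_rpow_one_div_of_le_mul_pow {a : ℕ → ℝ} {C : ℝ} {k : ℕ} (hC : 0 < C)
    (h₁ : ∀ n, 1 ≤ a n) (h₂ : ∀ᶠ n in atTop, a n ≤ C * (n : ℝ) ^ k) :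
    Tendsto (fun n : ℕ => a n ^ (1 / (n : ℝ))) atTop (𝓝 1) := by
  have hC' : Tendsto (fun n : ℕ => C ^ (1 / (n : ℝ))) atTop (𝓝 1) := by
    simpa using tendsto_const_nhds.rpow (tendsto_const_div_atTop_nhds_zero_nat 1) (.inl hC.ne')
  have hpow := (tendsto_rpow_div.comp tendsto_natCast_atTop_atTop).pow k
  refine tendsto_of_tendsto_of_tendsto_of_le_of_le' tendsto_const_nhds
    (by simpa only [one_pow, mul_one] using hC'.mul hpow)
    (.of_forall fun n => Real.one_le_rpow (h₁ n) (by positivity)) ?_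
  filter_upwards [h₂] with n hn
  calc a n ^ (1 / (n : ℝ)) ≤ (C * (n : ℝ) ^ k) ^ (1 / (n : ℝ)) :=
        Real.rpow_le_rpow (zero_le_one.trans (h₁ n)) hn (by positivity)
    _ = C ^ (1 / (n : ℝ)) * ((n : ℝ) ^ (1 / (n : ℝ))) ^ k := by
        rw [Real.mul_rpow hC.le (by positivity), Real.rpow_pow_comm (Nat.cast_nonneg n)]

section Modulus

variable {ω : ℝ → ℝ}

lemma IsModCont.pos_one (hω : IsModCont ω) (hinj : InjOn ω (Icc 0 1)) : 0 < ω 1 :=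
  (hω.nonneg 1 ⟨zero_le_one, le_rfl⟩).lt_of_ne fun h => one_ne_zero <|
    hinj ⟨zero_le_one, le_rfl⟩ ⟨le_rfl, zero_le_one⟩ (h.symm.trans hω.map_zero.symm)

lemma mul_le_of_antitoneOn_div (h₀ : 0 ≤ ω 0) (hdec : AntitoneOn (fun x => ω x / x) (Ioc 0 1))
    {d : ℝ} (hd : d ∈ Icc (0 : ℝ) 1) : ω 1 * d ≤ ω d := by
  rcases hd.1.eq_or_lt with rfl | hpos
  · simpa using h₀
  have h : ω 1 / 1 ≤ ω d / d := hdec ⟨hpos, hd.2⟩ ⟨one_pos, le_rfl⟩ hd.2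
  rwa [div_one, le_div_iff₀ hpos] at h

lemma inDiffOmega_of_lipschitz {f : ℝ → ℝ} {K : ℝ} (hω : IsModCont ω) (hω₁ : 0 < ω 1)
    (hdec : AntitoneOn (fun x => ω x / x) (Ioc 0 1))
    (hf : ∀ x ∈ Icc (0 : ℝ) 1, ∀ y ∈ Icc (0 : ℝ) 1,
      |derivWithin f (Icc 0 1) x - derivWithin f (Icc 0 1) y| ≤ K * |x - y|) :
    InDiffOmega ω f := by
  refine ⟨(|K| + 1) / ω 1, by positivity, fun x hx y hy => ?_⟩
  have hd : |x - y| ∈ Icc (0 : ℝ) 1 :=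
    ⟨abs_nonneg _, abs_sub_le_iff.2 ⟨by linarith [hx.2, hy.1], by linarith [hx.1, hy.2]⟩⟩
  calc |derivWithin f (Icc 0 1) x - derivWithin f (Icc 0 1) y| ≤ K * |x - y| := hf x hx y hy
    _ ≤ (|K| + 1) * |x - y| := by gcongr; linarith [le_abs_self K]
    _ = (|K| + 1) / ω 1 * (ω 1 * |x - y|) := by field_simp
    _ ≤ (|K| + 1) / ω 1 * ω |x - y| :=
        mul_le_mul_of_nonneg_left (mul_le_of_antitoneOn_div (hω.nonneg 0 ⟨le_rfl, zero_le_one⟩)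
          hdec hd) (by positivity)

lemma IsModCont.exists_eq_div (hω : IsModCont ω) (hω₁ : 0 < ω 1) {n : ℝ} (hn : 1 ≤ n) :
    ∃ x ∈ Ioc (0 : ℝ) 1, ω x = ω 1 / n := by
  obtain ⟨x, hx, hωx⟩ := intermediate_value_Icc zero_le_one hω.continuousOn
    ⟨by rw [hω.map_zero]; positivity, div_le_self hω₁.le hn⟩
  refine ⟨x, ⟨hx.1.lt_of_ne ?_, hx.2⟩, hωx⟩
  rintro rfl
  rw [hω.map_zero] at hωx
  exact (div_pos hω₁ (one_pos.trans_le hn)).ne' hωx.symm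

lemma strictMonoOn_sub_mul_log : StrictMonoOn (fun u => u - u * log u) (Icc 0 1) := by
  refine strictMonoOn_of_deriv_pos (convex_Icc 0 1)
    (continuous_id.sub continuous_mul_log).continuousOn fun u hu => ?_
  rw [interior_Icc] at hu
  have hd : HasDerivAt (fun u => u - u * log u) (1 - (log u + 1)) u :=
    (hasDerivAt_id u).sub (hasDerivAt_mul_log hu.1.ne')
  rw [hd.deriv]
  linarith [log_neg hu.1 hu.2]

lemma eventually_le_sub_mul_log
    (hlim : Tendsto (fun x => ω x / (x * log (exp 1 / x))) (𝓝[>] 0) (𝓝 0)) :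
    ∀ᶠ x in 𝓝[>] 0, ω x ≤ x - x * log x := by
  filter_upwards [hlim.eventually_lt_const one_pos, Ioo_mem_nhdsGT one_pos] with x hx hx01
  have hpos : 0 < x * log (exp 1 / x) :=
    mul_pos hx01.1 (log_pos ((one_lt_div hx01.1).2 (hx01.2.trans (one_lt_exp_iff.2 one_pos))))
  have := ((div_lt_one hpos).1 hx).le
  rwa [log_div (exp_ne_zero 1) hx01.1.ne', log_exp, mul_one_sub] at this

lemma eventually_one_add_mul_log_le {a c : ℝ} (ha : 1 < a) (hc : 0 < c) :
    ∀ᶠ x in atTop, 1 + a * log x ≤ c * x ^ (a - 1) := by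
  have hr : 0 < a - 1 := sub_pos.2 ha
  have h : (fun x => 1 + a * log x) =o[atTop] fun x => x ^ (a - 1) :=
    ((Asymptotics.isLittleO_one_left_iff ℝ).2
      (tendsto_norm_atTop_atTop.comp (tendsto_rpow_atTop hr))).add
      ((isLittleO_log_rpow_atTop hr).const_mul_left a)
  filter_upwards [h.def hc, eventually_ge_atTop 0] with x hx hx0
  rw [Real.norm_eq_abs, Real.norm_eq_abs, abs_of_nonneg (rpow_nonneg hx0 _)] at hx
  exact (le_abs_self _).trans hx

lemma eventually_rpow_neg_le
    (hlim : Tendsto (fun x => ω x / (x * log (exp 1 / x))) (𝓝[>] 0) (𝓝 0))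
    {a c : ℝ} (ha : 1 < a) (hc : 0 < c) :
    ∀ᶠ n : ℕ in atTop, ∀ x, 0 < x → c / n ≤ ω x → (n : ℝ) ^ (-a) ≤ x := by
  obtain ⟨δ, hδ, hbound⟩ :=
    mem_nhdsGT_iff_exists_Ioo_subset.1 (eventually_le_sub_mul_log hlim)
  have hsmall : Tendsto (fun n : ℕ => (n : ℝ) ^ (-a)) atTop (𝓝 0) :=
    (tendsto_rpow_neg_atTop (by linarith)).comp tendsto_natCast_atTop_atTop
  filter_upwards [hsmall.eventually_lt_const hδ, hsmall.eventually_le_const one_pos,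
    tendsto_natCast_atTop_atTop.eventually (eventually_one_add_mul_log_le ha hc),
    eventually_gt_atTop 0] with n hnδ hn1 hlog hn0 x hx hcx
  have hn : (0 : ℝ) < n := Nat.cast_pos.2 hn0
  have hy : (n : ℝ) ^ (-a) - (n : ℝ) ^ (-a) * log ((n : ℝ) ^ (-a)) ≤ c / n :=
    calc (n : ℝ) ^ (-a) - (n : ℝ) ^ (-a) * log ((n : ℝ) ^ (-a))
        = (n : ℝ) ^ (-a) * (1 + a * log n) := by rw [log_rpow hn]; ring
      _ ≤ (n : ℝ) ^ (-a) * (c * (n : ℝ) ^ (a - 1)) := by gcongr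
      _ = c / n := by
        rw [mul_left_comm, ← rpow_add hn, show -a + (a - 1) = -1 by ring, rpow_neg_one,
          div_eq_mul_inv]
  by_contra! hxy
  have hx1 : x ∈ Icc (0 : ℝ) 1 := ⟨hx.le, (hxy.trans_le hn1).le⟩
  have hφ : x - x * log x < (n : ℝ) ^ (-a) - (n : ℝ) ^ (-a) * log ((n : ℝ) ^ (-a)) :=
    strictMonoOn_sub_mul_log hx1 ⟨by positivity, hn1⟩ hxy
  have hωx : ω x ≤ x - x * log x := hbound ⟨hx, hxy.trans hnδ⟩
  linarith

lemma eventually_log_div_winv_le {winv : ℝ → ℝ} (hω : IsModCont ω)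
    (hlim : Tendsto (fun x => ω x / (x * log (exp 1 / x))) (𝓝[>] 0) (𝓝 0))
    (hwinv : LeftInvOn winv ω (Icc 0 1)) {η : ℝ} (hη : 0 < η) :
    ∀ᶠ n : ℕ in atTop, log (n / winv (ω 1 / n)) ∈ Icc 0 ((2 + η) * log n) := by
  have hω₁ := hω.pos_one hwinv.injOn
  filter_upwards [eventually_rpow_neg_le hlim (a := 1 + η) (by linarith) hω₁,
    eventually_ge_atTop 1] with n hn hn1
  have hn1' : (1 : ℝ) ≤ n := Nat.one_le_cast.2 hn1
  obtain ⟨x, hx, hωx⟩ := hω.exists_eq_div hω₁ hn1'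
  rw [← hωx, hwinv (Ioc_subset_Icc_self hx)]
  refine ⟨log_nonneg ((one_le_div hx.1).2 (hx.2.trans hn1')), ?_⟩
  have hlogx : -(1 + η) * log n ≤ log x := by
    rw [← log_rpow (by positivity)]
    exact log_le_log (by positivity) (hn x hx.1 hωx.ge)
  rw [log_div (by positivity) hx.1.ne']
  linarith

end Modulus

/-- The conjugate of the translation `y ↦ y + t` of `ℝ` by `x ↦ tan (π x - π / 2)`, a
bijection from `(0, 1)` onto `ℝ`, extended by the identity outside `(0, 1)`. -/
noncomputable def tanFlow (t x : ℝ) : ℝ :=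
  if x ≤ 0 then x else if 1 ≤ x then x
  else 1 / 2 + arctan (tan (π * x - π / 2) + t) / π

noncomputable def tanFlowDeriv (t x : ℝ) : ℝ :=
  (sin (π * x) ^ 2 + (t * sin (π * x) - cos (π * x)) ^ 2)⁻¹

lemma tanFlowDeriv_denom_pos (t x : ℝ) :
    0 < sin (π * x) ^ 2 + (t * sin (π * x) - cos (π * x)) ^ 2 :=
  pos_of_mul_pos_right (one_pos.trans_le (one_le_two_mul_one_add_sq_mul t (sin_sq_add_cos_sq _)))
    (by positivity)

lemma tanFlowDeriv_pos (t x : ℝ) : 0 < tanFlowDeriv t x :=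
  inv_pos.2 (tanFlowDeriv_denom_pos t x)

lemma tanFlowDeriv_le (t x : ℝ) : tanFlowDeriv t x ≤ 2 * (1 + t ^ 2) :=
  inv_le_of_inv_le₀ (by positivity) <| (inv_le_iff_one_le_mul₀' (by positivity)).2 <| by
    simpa [mul_comm] using one_le_two_mul_one_add_sq_mul t (sin_sq_add_cos_sq (π * x))

lemma tanFlowDeriv_one_half_sub_arctan_div_pi (t : ℝ) :
    tanFlowDeriv t (1 / 2 - arctan t / π) = 1 + t ^ 2 := by
  have h : π * (1 / 2 - arctan t / π) = π / 2 - arctan t := by field_simp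
  rw [tanFlowDeriv, h, sin_pi_div_two_sub, cos_pi_div_two_sub, cos_arctan, sin_arctan,
    mul_one_div, sub_self, zero_pow two_ne_zero, add_zero, div_pow, one_pow,
    sq_sqrt (by positivity), one_div, inv_inv]

lemma contDiff_tanFlowDeriv (t : ℝ) : ContDiff ℝ 1 (tanFlowDeriv t) :=
  ContDiff.inv (by fun_prop) fun x => (tanFlowDeriv_denom_pos t x).ne'

namespace tanFlow

variable {t x : ℝ}

lemma of_mem (hx : x ∈ Ioo (0 : ℝ) 1) :
    tanFlow t x = 1 / 2 + arctan (tan (π * x - π / 2) + t) / π := by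
  rw [tanFlow, if_neg (not_le.2 hx.1), if_neg (not_le.2 hx.2)]

lemma of_nonpos (hx : x ≤ 0) : tanFlow t x = x := if_pos hx

lemma of_one_le (hx : 1 ≤ x) : tanFlow t x = x := by
  unfold tanFlow; split_ifs <;> rfl

lemma mem_Ioo (hx : x ∈ Ioo (0 : ℝ) 1) : tanFlow t x ∈ Ioo (0 : ℝ) 1 := by
  have := arctan_div_pi_mem_Ioo (tan (π * x - π / 2) + t)
  rw [of_mem hx]
  constructor <;> linarith [this.1, this.2]

lemma mapsTo : MapsTo (tanFlow t) (Icc 0 1) (Icc 0 1) := by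
  intro x hx
  rcases hx.1.eq_or_lt with rfl | h₀
  · rw [of_nonpos le_rfl]; exact hx
  rcases hx.2.eq_or_lt with rfl | h₁
  · rw [of_one_le le_rfl]; exact hx
  exact Ioo_subset_Icc_self (mem_Ioo ⟨h₀, h₁⟩)

lemma apply_tanFlow (s : ℝ) : tanFlow t (tanFlow s x) = tanFlow (s + t) x := by
  rcases le_or_gt x 0 with h₀ | h₀
  · simp only [of_nonpos h₀]
  rcases le_or_gt 1 x with h₁ | h₁
  · simp only [of_one_le h₁]
  have hx : x ∈ Ioo (0 : ℝ) 1 := ⟨h₀, h₁⟩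
  have h : π * (1 / 2 + arctan (tan (π * x - π / 2) + s) / π) - π / 2 =
      arctan (tan (π * x - π / 2) + s) := by
    field_simp
    ring
  rw [of_mem (mem_Ioo hx), of_mem hx, of_mem hx, h, tan_arctan, add_assoc]

lemma zero_apply : tanFlow 0 x = x := by
  rcases le_or_gt x 0 with h₀ | h₀
  · exact of_nonpos h₀
  rcases le_or_gt 1 x with h₁ | h₁
  · exact of_one_le h₁
  have h₂ : -(π / 2) < π * x - π / 2 := by nlinarith [pi_pos]
  have h₃ : π * x - π / 2 < π / 2 := by nlinarith [pi_pos]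
  rw [of_mem ⟨h₀, h₁⟩, add_zero, arctan_tan h₂ h₃]
  field_simp
  ring

lemma iterate (n : ℕ) : (tanFlow t)^[n] = tanFlow (n * t) := by
  induction n with
  | zero => funext x; simp [zero_apply]
  | succ n ih =>
    funext x
    rw [Function.iterate_succ_apply', ih, apply_tanFlow]
    push_cast
    ring_nf

lemma hasDerivAt (hx : x ∈ Ioo (0 : ℝ) 1) :
    HasDerivAt (tanFlow t) (tanFlowDeriv t x) x := by
  have hs : 0 < sin (π * x) :=
    sin_pos_of_pos_of_lt_pi (mul_pos pi_pos hx.1) (mul_lt_of_lt_one_right pi_pos hx.2)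
  have hcos : cos (π * x - π / 2) ≠ 0 := by rw [cos_sub_pi_div_two]; exact hs.ne'
  have hlin : HasDerivAt (fun y : ℝ => π * y - π / 2) π x := by
    simpa using ((hasDerivAt_id x).const_mul π).sub_const (π / 2)
  have hf := ((((hasDerivAt_tan hcos).comp x hlin).add_const t).arctan.div_const π).const_add
    (1 / 2)
  refine (hf.congr_deriv ?_).congr_of_eventuallyEq
    (eventually_of_mem (Ioo_mem_nhds hx.1 hx.2) fun y hy => of_mem hy)
  rw [Function.comp_apply, tan_eq_sin_div_cos, sin_sub_pi_div_two, cos_sub_pi_div_two,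
    tanFlowDeriv]
  have := tanFlowDeriv_denom_pos t x
  field_simp
  ring
lemma tendsto_nhdsGT_zero : Tendsto (tanFlow t) (𝓝[>] 0) (𝓝 0) := by
  have hlin : Tendsto (fun y : ℝ => π * y - π / 2) (𝓝[>] 0) (𝓝[>] (-(π / 2))) := by
    refine tendsto_nhdsWithin_of_tendsto_nhds_of_eventually_within _ ?_ ?_
    · have : Continuous fun y : ℝ => π * y - π / 2 := by fun_prop
      simpa using (this.tendsto 0).mono_left nhdsWithin_le_nhds
    · filter_upwards [self_mem_nhdsWithin] with y (hy : 0 < y)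
      show -(π / 2) < π * y - π / 2
      nlinarith [pi_pos]
  have hlim := (((tendsto_arctan_atBot.mono_right nhdsWithin_le_nhds).comp
    (tendsto_atBot_add_const_right _ t (tendsto_tan_neg_pi_div_two.comp hlin))).div_const
      π).const_add (1 / 2)
  rw [neg_div, div_div_cancel_left' pi_ne_zero] at hlim
  norm_num at hlim
  refine hlim.congr' ?_
  filter_upwards [Ioo_mem_nhdsGT one_pos] with y hy
  exact (of_mem hy).symm


lemma tendsto_nhdsLT_one : Tendsto (tanFlow t) (𝓝[<] 1) (𝓝 1) := by
  have hlin : Tendsto (fun y : ℝ => π * y - π / 2) (𝓝[<] 1) (𝓝[<] (π / 2)) := by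
    refine tendsto_nhdsWithin_of_tendsto_nhds_of_eventually_within _ ?_ ?_
    · have : Continuous fun y : ℝ => π * y - π / 2 := by fun_prop
      convert (this.tendsto 1).mono_left nhdsWithin_le_nhds using 2
      ring
    · filter_upwards [self_mem_nhdsWithin] with y (hy : y < 1)
      show π * y - π / 2 < π / 2
      nlinarith [pi_pos]
  have hlim := (((tendsto_arctan_atTop.mono_right nhdsWithin_le_nhds).comp
    (tendsto_atTop_add_const_right _ t (tendsto_tan_pi_div_two.comp hlin))).div_const
      π).const_add (1 / 2)
  rw [div_div_cancel_left' pi_ne_zero] at hlim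
  norm_num at hlim
  refine hlim.congr' ?_
  filter_upwards [Ioo_mem_nhdsLT one_pos] with y hy
  exact (of_mem hy).symm


lemma hasDerivWithinAt (hx : x ∈ Icc (0 : ℝ) 1) :
    HasDerivWithinAt (tanFlow t) (tanFlowDeriv t x) (Icc 0 1) x := by
  refine hasDerivWithinAt_Icc_of_hasDerivAt_Ioo one_pos (fun _ hy => hasDerivAt hy)
    (contDiff_tanFlowDeriv t).continuous.continuousOn ?_ ?_ hx
  · rw [ContinuousWithinAt, of_nonpos le_rfl]
    exact tendsto_nhdsGT_zero
  · rw [ContinuousWithinAt, of_one_le le_rfl]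
    exact tendsto_nhdsLT_one

lemma derivWithin_eq (hx : x ∈ Icc (0 : ℝ) 1) :
    derivWithin (tanFlow t) (Icc 0 1) x = tanFlowDeriv t x :=
  (hasDerivWithinAt hx).derivWithin (uniqueDiffOn_Icc one_pos x hx)

lemma contDiffOn : ContDiffOn ℝ 1 (tanFlow t) (Icc 0 1) := by
  rw [show (1 : WithTop ℕ∞) = 0 + 1 from rfl,
    contDiffOn_succ_iff_derivWithin (uniqueDiffOn_Icc one_pos)]
  refine ⟨fun x hx => (hasDerivWithinAt hx).differentiableWithinAt, by simp, ?_⟩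
  exact contDiffOn_zero.2 <|
    (contDiff_tanFlowDeriv t).continuous.continuousOn.congr fun x hx => derivWithin_eq hx

lemma exists_lipschitz_derivWithin (t : ℝ) :
    ∃ K : ℝ, ∀ x ∈ Icc (0 : ℝ) 1, ∀ y ∈ Icc (0 : ℝ) 1,
      |derivWithin (tanFlow t) (Icc 0 1) x - derivWithin (tanFlow t) (Icc 0 1) y| ≤
        K * |x - y| := by
  obtain ⟨K, hK⟩ := (contDiff_tanFlowDeriv t).locallyLipschitz.locallyLipschitzOn
    |>.exists_lipschitzOnWith_of_compact (isCompact_Icc (a := 0) (b := 1))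
  refine ⟨K, fun x hx y hy => ?_⟩
  rw [derivWithin_eq hx, derivWithin_eq hy, ← Real.dist_eq, ← Real.dist_eq]
  exact hK.dist_le_mul x hx y hy

lemma abs_derivWithin_le (hx : x ∈ Icc (0 : ℝ) 1) :
    |derivWithin (tanFlow t) (Icc 0 1) x| ≤ 2 * (1 + t ^ 2) := by
  rw [derivWithin_eq hx, abs_of_pos (tanFlowDeriv_pos t x)]
  exact tanFlowDeriv_le t x

lemma supAbsDeriv_le (t : ℝ) : supAbsDeriv (tanFlow t) ≤ 2 * (1 + t ^ 2) :=
  Real.sSup_le (forall_mem_image.2 fun _ => abs_derivWithin_le) (by positivity)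

lemma le_supAbsDeriv (t : ℝ) : 1 + t ^ 2 ≤ supAbsDeriv (tanFlow t) := by
  have hx := one_half_sub_arctan_div_pi_mem_Icc t
  refine le_csSup_of_le ⟨_, forall_mem_image.2 fun _ => abs_derivWithin_le⟩ ⟨_, hx, rfl⟩ ?_
  dsimp only
  rw [derivWithin_eq hx, tanFlowDeriv_one_half_sub_arctan_div_pi, abs_of_pos (by positivity)]

end tanFlow

lemma one_add_sq_le_Gamma_tanFlow (n : ℕ) :
    1 + (n : ℝ) ^ 2 ≤ Gamma (tanFlow 1) (tanFlow (-1)) n := by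
  simpa [Gamma, tanFlow.iterate] using le_max_of_le_left (tanFlow.le_supAbsDeriv n)

lemma Gamma_tanFlow_le (n : ℕ) :
    Gamma (tanFlow 1) (tanFlow (-1)) n ≤ 2 * (1 + (n : ℝ) ^ 2) := by
  rw [Gamma, tanFlow.iterate, tanFlow.iterate, mul_one, mul_neg_one]
  refine max_le (tanFlow.supAbsDeriv_le n) ?_
  simpa using tanFlow.supAbsDeriv_le (-n)

lemma isDiff01_tanFlow : IsDiff01 (tanFlow 1) (tanFlow (-1)) where
  mapsTo := tanFlow.mapsTo
  inv_mapsTo := tanFlow.mapsTo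
  left_inv x _ := by rw [tanFlow.apply_tanFlow, add_neg_cancel, tanFlow.zero_apply]
  right_inv x _ := by rw [tanFlow.apply_tanFlow, neg_add_cancel, tanFlow.zero_apply]
  map_zero := tanFlow.of_nonpos le_rfl
  map_one := tanFlow.of_one_le le_rfl
  contDiffOn := tanFlow.contDiffOn
  inv_contDiffOn := tanFlow.contDiffOn
  deriv_pos x hx := by rw [tanFlow.derivWithin_eq hx]; exact tanFlowDeriv_pos 1 x

lemma gammaEqOne_tanFlow : GammaEqOne (tanFlow 1) (tanFlow (-1)) :=
  tendsto_rpow_one_div_of_le_mul_pow (C := 4) (k := 2) four_pos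
    (fun n => le_of_add_le_of_nonneg_left (one_add_sq_le_Gamma_tanFlow n) (by positivity)) <| by
    filter_upwards [eventually_ge_atTop 1] with n hn
    have : (1 : ℝ) ≤ n := by exact_mod_cast hn
    exact (Gamma_tanFlow_le n).trans (by nlinarith)

theorem sharpness_modulus_general (ω : ℝ → ℝ) (hω : IsModCont ω)
    (hdec : AntitoneOn (fun x => ω x / x) (Set.Ioc (0:ℝ) 1))
    (hlim : Filter.Tendsto (fun x => ω x / (x * Real.log (Real.exp 1 / x)))
      (nhdsWithin 0 (Set.Ioi 0)) (nhds 0))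
    (winv : ℝ → ℝ) (hwinv : ∀ x ∈ Set.Icc (0:ℝ) 1, winv (ω x) = x) :
    ∃ f g : ℝ → ℝ, IsDiff01 f g ∧ InDiffOmega ω f ∧ GammaEqOne f g ∧
      ∃ c > 0, ∀ ε > 0, ∃ N : ℕ, ∀ n : ℕ, N ≤ n →
        (1 - ε) * Real.log ((n:ℝ) / winv (c / (n:ℝ))) ≤ Real.log (Gamma f g n) := by
  have hω₁ : 0 < ω 1 := hω.pos_one (LeftInvOn.injOn hwinv)
  obtain ⟨K, hK⟩ := tanFlow.exists_lipschitz_derivWithin 1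
  refine ⟨tanFlow 1, tanFlow (-1), isDiff01_tanFlow, inDiffOmega_of_lipschitz hω hω₁ hdec hK,
    gammaEqOne_tanFlow, ω 1, hω₁, fun ε hε => ?_⟩
  obtain ⟨N, hN⟩ := eventually_atTop.1 <|
    (eventually_log_div_winv_le hω hlim hwinv hε).and (eventually_ge_atTop 1)
  refine ⟨N, fun n hn => ?_⟩
  obtain ⟨⟨hL₀, hL⟩, hn1⟩ := hN n hn
  have hlogn := log_nonneg (Nat.one_le_cast.2 hn1 : (1 : ℝ) ≤ n)
  calc (1 - ε) * log (n / winv (ω 1 / n)) ≤ 2 * log n := by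
        rcases le_total (log (n / winv (ω 1 / n))) (2 * log n) with h | h
        · nlinarith [mul_nonneg hε.le hL₀]
        · nlinarith [mul_nonneg hε.le (by linarith : 0 ≤ log (n / winv (ω 1 / n)) - log n)]
    _ = log ((n : ℝ) ^ 2) := by rw [log_pow]; norm_num
    _ ≤ log (Gamma (tanFlow 1) (tanFlow (-1)) n) :=
        log_le_log (by positivity) ((le_add_of_nonneg_left zero_le_one).trans
          (one_add_sq_le_Gamma_tanFlow n))

/-- **Theorem 6 (sharpness of Theorem 4).** Under the stated regularity assumptions on `ω`
there exists `f ∈ Diff₀^ω[0,1]` with `γ(f) = 1` and `c(f) > 0` such that for every `ε > 0`,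
`log Γ_n(f) ≥ (1-ε) · log (n / ω⁻¹(c(f)/n))` for all large `n`. -/
theorem sharpness_modulus (ω : ℝ → ℝ) (hω : IsModCont ω)
    (hinc : ∀ α : ℝ, 0 < α → α < 1 → ∃ a : ℝ, 0 < a ∧ a < 1 ∧
      MonotoneOn (fun x => ω x / x ^ α) (Set.Ioc 0 a))
    (hdec : AntitoneOn (fun x => ω x / x) (Set.Ioc (0:ℝ) 1))
    (hlim : Filter.Tendsto (fun x => ω x / (x * Real.log (Real.exp 1 / x)))
      (nhdsWithin 0 (Set.Ioi 0)) (nhds 0))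
    (hsm : StrictMonoOn ω (Set.Icc (0:ℝ) 1))
    (winv : ℝ → ℝ) (hwinv : ∀ x ∈ Set.Icc (0:ℝ) 1, winv (ω x) = x) :
    ∃ f g : ℝ → ℝ, IsDiff01 f g ∧ InDiffOmega ω f ∧ GammaEqOne f g ∧
      ∃ c > 0, ∀ ε > 0, ∃ N : ℕ, ∀ n : ℕ, N ≤ n →
        (1 - ε) * Real.log ((n:ℝ) / winv (c / (n:ℝ))) ≤ Real.log (Gamma f g n) :=
  sharpness_modulus_general ω hω hdec hlim winv hwinv
end

section
/- Let ω : [0,1] → [0,∞) be a modulus of continuity. If f ∈ Diff₀^ω[0,1], then its inverse f^{-1} belongs to Diff₀^ω[0,1]; that is, there exists a constant C(f) > 0 such that |(f^{-1})'(x) − (f^{-1})'(y)| ≤ C(f) · ω(|x−y|) for all x, y ∈ [0,1]. -/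
open Set Filter

/-!
By the chain rule `(f⁻¹)' = 1 / (f' ∘ f⁻¹)`. On the compact interval `f'` is bounded below by
some `m > 0`, so `|(f⁻¹)'(x) - (f⁻¹)'(y)| ≤ |f'(f⁻¹ x) - f'(f⁻¹ y)| / m²
≤ C ω(|f⁻¹ x - f⁻¹ y|) / m²`, and `f⁻¹` is `m⁻¹`-Lipschitz. Subadditivity and monotonicity of `ω`
give `ω(s) ≤ N ω(t)` whenever `s ≤ N t`, which absorbs the Lipschitz constant `N = ⌈m⁻¹⌉`.
-/

namespace IsModCont

variable {ω : ℝ → ℝ}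

theorem le_nat_mul (hω : IsModCont ω) (n : ℕ) {t : ℝ} (ht : 0 ≤ t) (hnt : n * t ≤ 1) :
    ω (n * t) ≤ n * ω t := by
  induction n with
  | zero => simp [hω.map_zero]
  | succ n ih =>
    have hsucc : ((n + 1 : ℕ) : ℝ) * t = n * t + t := by push_cast; ring
    rw [hsucc] at hnt ⊢
    calc ω (n * t + t) ≤ ω (n * t) + ω t := hω.subadd _ _ (by positivity) ht hnt
      _ ≤ n * ω t + ω t := by gcongr; exact ih (by linarith)
      _ = ((n + 1 : ℕ) : ℝ) * ω t := by push_cast; ring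

/-- The truncation `min t N⁻¹` keeps `N * t` inside `[0,1]`, where subadditivity applies. -/
theorem le_nat_mul_of_le (hω : IsModCont ω) (N : ℕ) {s t : ℝ} (hs : s ∈ Icc (0:ℝ) 1)
    (ht : t ∈ Icc (0:ℝ) 1) (hst : s ≤ N * t) : ω s ≤ N * ω t := by
  set t' := min t (N : ℝ)⁻¹ with ht'
  have ht'0 : 0 ≤ t' := le_min ht.1 (by positivity)
  have hNt' : N * t' ≤ 1 := by
    calc (N : ℝ) * t' ≤ N * (N : ℝ)⁻¹ := by gcongr; exact min_le_right _ _
      _ ≤ 1 := mul_inv_le_one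
  have hsNt' : s ≤ N * t' := by
    rcases min_cases t (N : ℝ)⁻¹ with ⟨hmin, -⟩ | ⟨hmin, -⟩
    · rwa [ht', hmin]
    · rcases Nat.eq_zero_or_pos N with hN | hN
      · simpa [hN] using hst
      · rw [ht', hmin, mul_inv_cancel₀ (by positivity)]
        exact hs.2
  have ht't : t' ≤ t := min_le_left _ _
  calc ω s ≤ ω (N * t') := hω.monotoneOn hs ⟨by positivity, hNt'⟩ hsNt'
    _ ≤ N * ω t' := hω.le_nat_mul N ht'0 hNt'
    _ ≤ N * ω t := by
      gcongr
      exact hω.monotoneOn ⟨ht'0, ht't.trans ht.2⟩ ht ht't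

end IsModCont

theorem abs_inv_sub_inv_le {m a b : ℝ} (hm : 0 < m) (ha : m ≤ a) (hb : m ≤ b) :
    |a⁻¹ - b⁻¹| ≤ |a - b| / m ^ 2 := by
  have ha0 : 0 < a := hm.trans_le ha
  have hb0 : 0 < b := hm.trans_le hb
  rw [inv_sub_inv ha0.ne' hb0.ne', abs_div, abs_sub_comm, abs_of_pos (mul_pos ha0 hb0)]
  gcongr
  nlinarith

theorem derivWithin_comp_mul_derivWithin_of_rightInv {s : Set ℝ} (hs : UniqueDiffOn ℝ s)
    {f g : ℝ → ℝ} (hf : DifferentiableOn ℝ f s) (hg : DifferentiableOn ℝ g s)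
    (hgs : MapsTo g s s) (hfg : ∀ x ∈ s, f (g x) = x) {x : ℝ} (hx : x ∈ s) :
    derivWithin f s (g x) * derivWithin g s x = 1 := by
  have hcomp : HasDerivWithinAt (f ∘ g) (derivWithin f s (g x) * derivWithin g s x) s x :=
    (hf (g x) (hgs hx)).hasDerivWithinAt.comp x (hg x hx).hasDerivWithinAt hgs
  have hid : HasDerivWithinAt id (derivWithin f s (g x) * derivWithin g s x) s x :=
    hcomp.congr (fun y hy => (hfg y hy).symm) (hfg x hx).symm
  rw [← hid.derivWithin (hs x hx), derivWithin_id x s (hs x hx)]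

namespace IsDiff01

variable {f g : ℝ → ℝ}

theorem derivWithin_inv (hf : IsDiff01 f g) {x : ℝ} (hx : x ∈ Icc (0:ℝ) 1) :
    derivWithin g (Icc 0 1) x = (derivWithin f (Icc 0 1) (g x))⁻¹ :=
  (eq_inv_of_mul_eq_one_right (derivWithin_comp_mul_derivWithin_of_rightInv
    (uniqueDiffOn_Icc zero_lt_one) (hf.contDiffOn.differentiableOn one_ne_zero)
    (hf.inv_contDiffOn.differentiableOn one_ne_zero) hf.inv_mapsTo hf.right_inv hx))

theorem exists_pos_le_derivWithin (hf : IsDiff01 f g) :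
    ∃ m > 0, ∀ x ∈ Icc (0:ℝ) 1, m ≤ derivWithin f (Icc 0 1) x := by
  have hcont : ContinuousOn (derivWithin f (Icc 0 1)) (Icc (0:ℝ) 1) :=
    hf.contDiffOn.continuousOn_derivWithin (uniqueDiffOn_Icc zero_lt_one) le_rfl
  obtain ⟨z, hz, hmin⟩ :=
    isCompact_Icc.exists_isMinOn (nonempty_Icc.2 zero_le_one) hcont
  exact ⟨_, hf.deriv_pos z hz, fun x hx => hmin hx⟩

theorem abs_inv_sub_le (hf : IsDiff01 f g) {m : ℝ} (hm : 0 < m)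
    (hmf : ∀ x ∈ Icc (0:ℝ) 1, m ≤ derivWithin f (Icc 0 1) x)
    {x y : ℝ} (hx : x ∈ Icc (0:ℝ) 1) (hy : y ∈ Icc (0:ℝ) 1) :
    |g x - g y| ≤ m⁻¹ * |x - y| := by
  have hderiv : ∀ z ∈ Icc (0:ℝ) 1, ‖derivWithin g (Icc 0 1) z‖ ≤ m⁻¹ := by
    intro z hz
    have hgz := hf.inv_mapsTo hz
    rw [hf.derivWithin_inv hz, Real.norm_eq_abs, abs_inv,
      abs_of_pos (hf.deriv_pos _ hgz)]
    exact inv_anti₀ hm (hmf _ hgz)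
  simpa only [Real.norm_eq_abs] using
    (convex_Icc (0:ℝ) 1).norm_image_sub_le_of_norm_derivWithin_le
      (hf.inv_contDiffOn.differentiableOn one_ne_zero) hderiv hy hx

end IsDiff01

theorem abs_sub_mem_Icc_zero_one {x y : ℝ} (hx : x ∈ Icc (0:ℝ) 1) (hy : y ∈ Icc (0:ℝ) 1) :
    |x - y| ∈ Icc (0:ℝ) 1 :=
  ⟨abs_nonneg _, abs_sub_le_iff.2 ⟨by linarith [hx.2, hy.1], by linarith [hx.1, hy.2]⟩⟩

/-- `Diff₀^ω[0,1]` is closed under inversion: if `f ∈ Diff₀^ω[0,1]` with inverse `g`,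
then `g ∈ Diff₀^ω[0,1]`. -/
theorem diffOmega_inv (ω : ℝ → ℝ) (hω : IsModCont ω)
    (f g : ℝ → ℝ) (hf : IsDiff01 f g) (hfω : InDiffOmega ω f) :
    ∃ C > 0, ∀ x ∈ Set.Icc (0:ℝ) 1, ∀ y ∈ Set.Icc (0:ℝ) 1,
      |derivWithin g (Set.Icc (0:ℝ) 1) x - derivWithin g (Set.Icc (0:ℝ) 1) y|
        ≤ C * ω |x - y| := by
  obtain ⟨C, hC, hfC⟩ := hfω
  obtain ⟨m, hm, hmf⟩ := hf.exists_pos_le_derivWithin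
  set N := ⌈m⁻¹⌉₊
  have hN : 0 < N := Nat.ceil_pos.2 (inv_pos.2 hm)
  refine ⟨C * N / m ^ 2, by positivity, fun x hx y hy => ?_⟩
  have hgx := hf.inv_mapsTo hx
  have hgy := hf.inv_mapsTo hy
  have hωg : ω |g x - g y| ≤ N * ω |x - y| :=
    hω.le_nat_mul_of_le N (abs_sub_mem_Icc_zero_one hgx hgy) (abs_sub_mem_Icc_zero_one hx hy)
      ((hf.abs_inv_sub_le hm hmf hx hy).trans (by gcongr; exact Nat.le_ceil _))
  rw [hf.derivWithin_inv hx, hf.derivWithin_inv hy]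
  calc _ ≤ |derivWithin f (Icc 0 1) (g x) - derivWithin f (Icc 0 1) (g y)| / m ^ 2 :=
        abs_inv_sub_inv_le hm (hmf _ hgx) (hmf _ hgy)
    _ ≤ C * ω |g x - g y| / m ^ 2 := by gcongr; exact hfC _ hgx _ hgy
    _ ≤ C * (N * ω |x - y|) / m ^ 2 := by gcongr
    _ = C * N / m ^ 2 * ω |x - y| := by ring
end
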